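/- arXiv:2109.05535 — 5 statements merged into one kernel-verified Lean document; each statement's English description precedes it below -/
import Mathlib

section
/- Let K̃ ∈ ℝ^{n×n} be symmetric with K̃ 1_n = 0 (a centered Gram matrix), let Y ∈ ℝ^{p×n}, let γ > 0, and set Ỹ = Y D with D = I_n − (1/n)·1_n 1_nᵀ. Let M ∈ ℝ^{2n×n} be the block matrix stacking K̃ on top of √(nγ)·I_n, and let P_M = M(MᵀM)⁻¹Mᵀ. Then M has full column rank n, and the infimum over Λ ∈ ℝ^{p×n} and b ∈ ℝ^p of (1/n)·Σ_{k=1}^n ‖Λ (K̃ e_k) + b − y_k‖² + γ‖Λ‖_F² equals (1/n)‖Ỹ‖_F² − (1/n)‖P_M U‖_F², where U ∈ ℝ^{2n×p} is the block matrix stacking Ỹᵀ on top of the n×p zero matrix. -/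
/-!
Since `K̃ 1 = 0`, every row of `ΛK̃` sums to zero, so the data-fit term splits as
`‖ΛK̃ - Ỹ‖_F² + n‖b - ȳ‖²`, where `ȳ` is the vector of row means of `Y`; the optimal bias is `ȳ`.
Since `K̃` is symmetric, `‖ΛK̃ - Ỹ‖_F² + nγ‖Λ‖_F² = ‖MΛᵀ - U‖_F²`, so what remains is ordinary least
squares in `X = Λᵀ`. The residual `U - P_M U` is orthogonal to the column space of `M`, whence
`‖MX - U‖² = ‖MX - P_M U‖² + ‖U‖² - ‖P_M U‖²`, minimized at `X = (MᵀM)⁻¹MᵀU`.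
Finally `MᵀM = K̃ᵀK̃ + nγ I` is positive definite, which gives both its invertibility and the rank.

Squared Frobenius norms are handled as `trace (Aᵀ * A)`, so that the Pythagorean step is an
identity of matrices rather than of scalars.
-/

open Matrix

namespace Matrix

variable {m n q R : Type*}

theorem transpose_mul_self_add_of_transpose_mul_eq_zero [Fintype m] [CommRing R]
    {A B : Matrix m q R} (h : Aᵀ * B = 0) : (A + B)ᵀ * (A + B) = Aᵀ * A + Bᵀ * B := by
  have h' : Bᵀ * A = 0 := by rw [← transpose_transpose A, ← transpose_mul, h, transpose_zero]
  rw [transpose_add, Matrix.add_mul, Matrix.mul_add, Matrix.mul_add, h, h']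
  abel

theorem least_squares_pythagoras [Fintype m] [Fintype n] [CommRing R] [DecidableEq n]
    (M : Matrix m n R) (hM : IsUnit (Mᵀ * M).det) (X : Matrix n q R) (U : Matrix m q R) :
    (M * X - U)ᵀ * (M * X - U) =
      (M * X - M * (Mᵀ * M)⁻¹ * Mᵀ * U)ᵀ * (M * X - M * (Mᵀ * M)⁻¹ * Mᵀ * U) + Uᵀ * U
        - (M * (Mᵀ * M)⁻¹ * Mᵀ * U)ᵀ * (M * (Mᵀ * M)⁻¹ * Mᵀ * U) := by
  set X₀ := (Mᵀ * M)⁻¹ * Mᵀ * U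
  have hPU : M * (Mᵀ * M)⁻¹ * Mᵀ * U = M * X₀ := by simp only [X₀, Matrix.mul_assoc]
  have hnormal : Mᵀ * (M * X₀) = Mᵀ * U := by
    simp only [X₀, ← Matrix.mul_assoc, mul_nonsing_inv _ hM, Matrix.one_mul]
  set R₀ := U - M * X₀
  have horth (Z : Matrix n q R) : (M * Z)ᵀ * R₀ = 0 := by
    rw [transpose_mul, Matrix.mul_assoc, Matrix.mul_sub, hnormal, sub_self, Matrix.mul_zero]
  have hU := transpose_mul_self_add_of_transpose_mul_eq_zero (horth X₀)
  rw [add_sub_cancel] at hU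
  have hres := transpose_mul_self_add_of_transpose_mul_eq_zero (A := M * (X - X₀)) (B := -R₀)
    (by rw [Matrix.mul_neg, horth, neg_zero])
  have hsplit : M * X - U = M * (X - X₀) + -R₀ := by simp only [R₀, Matrix.mul_sub]; abel
  rw [hPU, hsplit, hres, hU, ← Matrix.mul_sub, transpose_neg, Matrix.neg_mul, Matrix.mul_neg,
    neg_neg]
  abel

theorem trace_transpose_mul_self [Fintype m] [Fintype n] [Semiring R] (A : Matrix m n R) :
    (Aᵀ * A).trace = ∑ i, ∑ j, A i j ^ 2 := by
  simp only [trace, diag, mul_apply, transpose_apply, sq]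
  exact Finset.sum_comm

theorem trace_mul_transpose_self [Fintype m] [Fintype n] [Semiring R] (A : Matrix m n R) :
    (A * Aᵀ).trace = ∑ i, ∑ j, A i j ^ 2 := by
  simp only [trace, diag, mul_apply, transpose_apply, sq]

theorem fromRows_transpose_mul_self [Fintype m] [Fintype q] [CommRing R] (A : Matrix m n R)
    (B : Matrix q n R) : (fromRows A B)ᵀ * fromRows A B = Aᵀ * A + Bᵀ * B := by
  rw [transpose_fromRows, fromCols_mul_fromRows]

theorem posDef_fromRows_smul_one_transpose_mul_self [Fintype m] [Fintype n] [DecidableEq n]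
    (K : Matrix m n ℝ) {c : ℝ} (hc : c ≠ 0) :
    PosDef ((fromRows K (c • 1 : Matrix n n ℝ))ᵀ * fromRows K (c • 1 : Matrix n n ℝ)) := by
  rw [fromRows_transpose_mul_self, transpose_smul, transpose_one, smul_mul_smul, Matrix.one_mul]
  exact PosDef.posSemidef_add (posSemidef_conjTranspose_mul_self K)
    (PosDef.one.smul (mul_self_pos.2 hc))

theorem mul_centering_apply [Fintype n] [DecidableEq n] [Ring R] (Y : Matrix m n R) (c : R)
    (j : m) (k : n) :
    (Y * (1 - c • of fun _ _ => 1 : Matrix n n R)) j k = Y j k - (∑ i, Y j i) * c := by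
  simp [mul_apply, mul_sub, Finset.sum_sub_distrib, one_apply, Finset.sum_mul]

theorem centering_mulVec_one [Field R] [CharZero R] {n : ℕ} (hn : n ≠ 0) :
    (1 - (n : R)⁻¹ • of fun _ _ : Fin n => (1 : R)) *ᵥ 1 = 0 := by
  ext i
  simp [mulVec, dotProduct, one_apply, hn]

theorem sum_sum_add_sq_of_mulVec_one_eq_zero [Fintype m] [Fintype n] [CommRing R]
    {E : Matrix m n R} (hE : E *ᵥ 1 = 0) (c : m → R) :
    ∑ i, ∑ j, (E i j + c i) ^ 2 = ∑ i, ∑ j, E i j ^ 2 + Fintype.card n * ∑ i, c i ^ 2 := by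
  have hrow (i : m) : ∑ j, E i j = 0 := by simpa [mulVec, dotProduct_one] using congrFun hE i
  simp only [add_sq, Finset.sum_add_distrib, ← Finset.sum_mul, ← Finset.mul_sum, hrow,
    Finset.sum_const, Finset.card_univ, nsmul_eq_mul]
  simp

theorem ridge_loss_eq_trace_stacked_residual [Fintype m] [Fintype n] [DecidableEq n] [CommRing R]
    {K : Matrix n n R} (hK : K.IsSymm) (hK₁ : K *ᵥ 1 = 0) {Y Yc : Matrix m n R} {ybar : m → R}
    (hY : ∀ j k, Y j k = Yc j k + ybar j) (hYc : Yc *ᵥ 1 = 0) (Λ : Matrix m n R) (b : m → R)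
    (c : R) :
    ∑ k, ∑ j, ((Λ * K) j k + b j - Y j k) ^ 2 + c * c * ∑ j, ∑ i, Λ j i ^ 2 =
      trace ((fromRows K (c • 1 : Matrix n n R) * Λᵀ - fromRows Ycᵀ (0 : Matrix n m R))ᵀ *
        (fromRows K (c • 1 : Matrix n n R) * Λᵀ - fromRows Ycᵀ (0 : Matrix n m R)))
        + Fintype.card n * ∑ j, (b j - ybar j) ^ 2 := by
  have hE : (Λ * K - Yc) *ᵥ 1 = 0 := by
    rw [sub_mulVec, ← mulVec_mulVec, hK₁, mulVec_zero, hYc, sub_zero]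
  have hstack : fromRows K (c • 1) * Λᵀ - fromRows Ycᵀ (0 : Matrix n m R) =
      fromRows (Λ * K - Yc)ᵀ (c • Λᵀ) := by
    rw [fromRows_mul, Matrix.smul_mul, Matrix.one_mul, transpose_sub, transpose_mul, hK.eq]
    ext (i | i) j <;> simp
  have hfit : ∑ k, ∑ j, ((Λ * K) j k + b j - Y j k) ^ 2 =
      ∑ j, ∑ k, ((Λ * K - Yc) j k + (b j - ybar j)) ^ 2 := by
    rw [Finset.sum_comm]
    refine Finset.sum_congr rfl fun j _ => Finset.sum_congr rfl fun k _ => ?_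
    rw [hY, sub_apply]
    ring
  rw [hfit, sum_sum_add_sq_of_mulVec_one_eq_zero hE, hstack, fromRows_transpose_mul_self,
    transpose_transpose, transpose_smul, transpose_transpose, Matrix.smul_mul, Matrix.mul_smul,
    smul_smul, trace_add, trace_smul, trace_mul_transpose_self, trace_mul_transpose_self,
    smul_eq_mul]
  ring

end Matrix

theorem ciInf_ciInf_eq_of_forall_le_of_eq {α β γ : Type*} [ConditionallyCompleteLattice γ]
    {f : α → β → γ} {c : γ} (hle : ∀ a b, c ≤ f a b) {a₀ : α} {b₀ : β} (heq : f a₀ b₀ = c) :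
    ⨅ a, ⨅ b, f a b = c := by
  have : Nonempty β := ⟨b₀⟩
  have hinner (a : α) : c ≤ ⨅ b, f a b := le_ciInf (hle a)
  refine le_antisymm ?_ (have : Nonempty α := ⟨a₀⟩; le_ciInf hinner)
  exact ciInf_le_of_le ⟨c, Set.forall_mem_range.2 hinner⟩ a₀ <|
    ciInf_le_of_le ⟨c, Set.forall_mem_range.2 (hle a₀)⟩ b₀ heq.le

/-- (Lemma 1, single regressor.) For a symmetric centered Gram matrix `K̃`
(`K̃ 1ₙ = 0`), labels `Y ∈ ℝ^{p×n}`, ridge parameter `γ > 0`, `Ỹ = Y D`,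
`M = [K̃; √(nγ) Iₙ] ∈ ℝ^{2n×n}` and `P_M = M(MᵀM)⁻¹Mᵀ`: `M` has full column rank `n`,
and the regularized minimum MSE
`inf_{Λ,b} (1/n)Σₖ ‖Λ(K̃ eₖ) + b - yₖ‖² + γ‖Λ‖_F²` equals
`(1/n)‖Ỹ‖_F² - (1/n)‖P_M U‖_F²` where `U = [Ỹᵀ; 0]`. -/
theorem kernel_ridge_min_mse {n p : ℕ} (hn : 0 < n)
    (K : Matrix (Fin n) (Fin n) ℝ) (hKsymm : K.IsSymm)
    (hKcentered : K.mulVec (fun _ => (1 : ℝ)) = 0)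
    (Y : Matrix (Fin p) (Fin n) ℝ) (γ : ℝ) (hγ : 0 < γ) :
    let D : Matrix (Fin n) (Fin n) ℝ := 1 - (n : ℝ)⁻¹ • Matrix.of (fun _ _ => (1 : ℝ))
    let Yt : Matrix (Fin p) (Fin n) ℝ := Y * D
    let M : Matrix (Fin n ⊕ Fin n) (Fin n) ℝ :=
      Matrix.fromRows K (Real.sqrt (n * γ) • (1 : Matrix (Fin n) (Fin n) ℝ))
    let P : Matrix (Fin n ⊕ Fin n) (Fin n ⊕ Fin n) ℝ := M * (Mᵀ * M)⁻¹ * Mᵀ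
    let U : Matrix (Fin n ⊕ Fin n) (Fin p) ℝ := Matrix.fromRows Ytᵀ 0
    M.rank = n ∧
    (⨅ Λ : Matrix (Fin p) (Fin n) ℝ, ⨅ b : Fin p → ℝ,
        (n : ℝ)⁻¹ * (∑ k, ∑ j, (Λ.mulVec (fun i => K i k) j + b j - Y j k) ^ 2) +
          γ * ∑ j, ∑ i, (Λ j i) ^ 2) =
      (n : ℝ)⁻¹ * (∑ j, ∑ k, (Yt j k) ^ 2) -
        (n : ℝ)⁻¹ * (∑ i, ∑ j, ((P * U) i j) ^ 2) := by
  intro D Yt M P U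
  have hnγ : 0 < (n : ℝ) * γ := by positivity
  have hc : √(n * γ) * √(n * γ) = n * γ := Real.mul_self_sqrt hnγ.le
  have hG : (Mᵀ * M).PosDef :=
    posDef_fromRows_smul_one_transpose_mul_self K (Real.sqrt_ne_zero'.2 hnγ)
  refine ⟨by rw [← rank_transpose_mul_self, rank_of_isUnit _ hG.isUnit, Fintype.card_fin], ?_⟩
  set ybar : Fin p → ℝ := fun j => (∑ i, Y j i) * (n : ℝ)⁻¹
  have hY (j k) : Y j k = Yt j k + ybar j := by simp only [Yt, D, ybar, mul_centering_apply]; ring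
  have hYt : Yt *ᵥ 1 = 0 := by rw [← mulVec_mulVec, centering_mulVec_one hn.ne', mulVec_zero]
  have hUU : (Uᵀ * U).trace = ∑ j, ∑ k, Yt j k ^ 2 := by
    rw [fromRows_transpose_mul_self, transpose_transpose, transpose_zero, Matrix.zero_mul,
      add_zero, trace_mul_transpose_self]
  have hobj (Λ : Matrix (Fin p) (Fin n) ℝ) (b : Fin p → ℝ) :
      (n : ℝ)⁻¹ * (∑ k, ∑ j, (Λ.mulVec (fun i => K i k) j + b j - Y j k) ^ 2) +
          γ * ∑ j, ∑ i, (Λ j i) ^ 2 =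
        (n : ℝ)⁻¹ * (∑ j, ∑ k, (Yt j k) ^ 2) - (n : ℝ)⁻¹ * (∑ i, ∑ j, ((P * U) i j) ^ 2) +
          (n : ℝ)⁻¹ * ((M * Λᵀ - P * U)ᵀ * (M * Λᵀ - P * U)).trace + ∑ j, (b j - ybar j) ^ 2 := by
    have hloss : ∑ k, ∑ j, (Λ.mulVec (fun i => K i k) j + b j - Y j k) ^ 2 +
        n * γ * ∑ j, ∑ i, Λ j i ^ 2 =
          ((M * Λᵀ - U)ᵀ * (M * Λᵀ - U)).trace + n * ∑ j, (b j - ybar j) ^ 2 := by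
      have h := ridge_loss_eq_trace_stacked_residual hKsymm hKcentered hY hYt Λ b √(n * γ)
      rw [Fintype.card_fin, hc] at h
      exact h
    have hLS := congrArg trace
      (least_squares_pythagoras M ((isUnit_iff_isUnit_det _).1 hG.isUnit) Λᵀ U)
    rw [trace_sub, trace_add, hUU] at hLS
    rw [← trace_transpose_mul_self (P * U)]
    field_simp
    linear_combination hloss + hLS
  refine ciInf_ciInf_eq_of_forall_le_of_eq (fun Λ b => ?_) (a₀ := ((Mᵀ * M)⁻¹ * Mᵀ * U)ᵀ)
    (b₀ := ybar) ?_
  · rw [hobj, trace_transpose_mul_self, add_assoc]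
    exact le_add_of_nonneg_right (by positivity)
  · rw [hobj, transpose_transpose]
    simp [P, Matrix.mul_assoc]
end

section
/- Let Y ∈ ℝ^{p×n} and S ∈ ℝ^{q×n}, let D = I_n − (1/n)·1_n 1_nᵀ, Ỹ = Y D, S̃ = S D, and let λ ∈ [0,1]. For Z ∈ ℝ^{r×n} define J_y(Z) as the infimum over W ∈ ℝ^{p×r}, b ∈ ℝ^p of (1/n)Σ_{k=1}^n ‖W z_k + b − y_k‖², and define J_s(Z) analogously with S in place of Y. Let Z̃ = Z D and let P ∈ ℝ^{n×n} be the orthogonal projection onto the row space of Z̃. Then (1−λ)·J_y(Z) − λ·J_s(Z) = (1/n)·[ (1−λ)‖Ỹ‖_F² − λ‖S̃‖_F² + trace(P B) ], where B = λ·S̃ᵀS̃ − (1−λ)·ỸᵀỸ. -/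
open Matrix

open BigOperators in
section
namespace ARLhelp

/-- squared Frobenius norm -/
def sqF {m k : ℕ} (M : Matrix (Fin m) (Fin k) ℝ) : ℝ := ∑ j, ∑ l, (M j l)^2

lemma sqF_nonneg {m k : ℕ} (M : Matrix (Fin m) (Fin k) ℝ) : 0 ≤ sqF M :=
  Finset.sum_nonneg fun _ _ => Finset.sum_nonneg fun _ _ => sq_nonneg _

lemma sqF_eq_trace {m k : ℕ} (M : Matrix (Fin m) (Fin k) ℝ) : sqF M = trace (M * Mᵀ) := by
  simp [sqF, trace, Matrix.mul_apply, Matrix.diag, sq]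

lemma sqF_neg {m k : ℕ} (M : Matrix (Fin m) (Fin k) ℝ) : sqF (-M) = sqF M := by
  simp [sqF]

lemma pythagoras {m k : ℕ} (M : Matrix (Fin m) (Fin k) ℝ) (Q : Matrix (Fin k) (Fin k) ℝ)
    (hQs : Qᵀ = Q) (hQi : Q * Q = Q) :
    sqF M = sqF (M * Q) + sqF (M * (1 - Q)) := by
  rw [sqF_eq_trace, sqF_eq_trace, sqF_eq_trace]
  have h1 : (M * Q) * (M * Q)ᵀ = M * (Q * Mᵀ) := by
    rw [transpose_mul, hQs, Matrix.mul_assoc, ← Matrix.mul_assoc Q Q, hQi]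
  have h2 : (M * (1 - Q)) * (M * (1 - Q))ᵀ = M * ((1 - Q) * Mᵀ) := by
    have hs : (1 - Q)ᵀ = 1 - Q := by rw [transpose_sub, transpose_one, hQs]
    have hi : (1 - Q) * (1 - Q) = 1 - Q := by
      rw [Matrix.sub_mul, Matrix.mul_sub, Matrix.mul_sub, Matrix.one_mul, Matrix.mul_one, hQi]
      simp [Matrix.one_mul]
    rw [transpose_mul, hs, Matrix.mul_assoc, ← Matrix.mul_assoc (1 - Q) (1 - Q), hi]
  rw [h1, h2, ← trace_add, ← Matrix.mul_add, ← Matrix.add_mul]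
  rw [add_sub_cancel, Matrix.one_mul]

lemma iInf_iInf_eq {α β : Type*} [Nonempty α] [Nonempty β] (f : α → β → ℝ) (c : ℝ)
    (h1 : ∀ a b, c ≤ f a b) (h2 : ∃ a b, f a b = c) :
    (⨅ a, ⨅ b, f a b) = c := by
  obtain ⟨a₀, b₀, hab⟩ := h2
  apply le_antisymm
  · have hbdd : ∀ a, BddBelow (Set.range (f a)) := fun a => ⟨c, by rintro x ⟨b, rfl⟩; exact h1 a b⟩
    have hbdd2 : BddBelow (Set.range fun a => ⨅ b, f a b) := by
      refine ⟨c, ?_⟩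
      rintro x ⟨a, rfl⟩
      exact le_ciInf (h1 a)
    calc (⨅ a, ⨅ b, f a b) ≤ ⨅ b, f a₀ b := ciInf_le hbdd2 a₀
      _ ≤ f a₀ b₀ := ciInf_le (hbdd a₀) b₀
      _ = c := hab
  · exact le_ciInf fun a => le_ciInf fun b => h1 a b



noncomputable def Dmat (n : ℕ) : Matrix (Fin n) (Fin n) ℝ :=
  1 - (n : ℝ)⁻¹ • Matrix.of (fun _ _ => (1 : ℝ))

lemma Dmat_symm (n : ℕ) : (Dmat n)ᵀ = Dmat n := by
  ext i j
  simp [Dmat, Matrix.one_apply, eq_comm]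

lemma mul_Dmat_apply {m n : ℕ} (A : Matrix (Fin m) (Fin n) ℝ) (j : Fin m) (k : Fin n) :
    (A * Dmat n) j k = A j k - (n : ℝ)⁻¹ * ∑ l, A j l := by
  rw [Matrix.mul_apply]
  simp only [Dmat, Matrix.sub_apply, Matrix.smul_apply, Matrix.of_apply, smul_eq_mul, mul_one,
    Matrix.one_apply, mul_sub, mul_ite, mul_one, mul_zero]
  rw [Finset.sum_sub_distrib, Finset.sum_ite_eq' Finset.univ k (fun l => A j l)]
  rw [← Finset.sum_mul]
  simp
  ring

lemma Dmat_rowsum {n : ℕ} (hn : 0 < n) (j : Fin n) : ∑ l, Dmat n j l = 0 := by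
  have hn' : (n : ℝ) ≠ 0 := Nat.cast_ne_zero.mpr hn.ne'
  simp [Dmat, Matrix.one_apply, Finset.sum_sub_distrib, Finset.sum_ite_eq Finset.univ j,
    Finset.card_univ, hn']

lemma Dmat_idem {n : ℕ} (hn : 0 < n) : Dmat n * Dmat n = Dmat n := by
  ext i k
  rw [mul_Dmat_apply, Dmat_rowsum hn]
  simp



lemma J_formula {r n p : ℕ} (hn : 0 < n) (Y : Matrix (Fin p) (Fin n) ℝ)
    (Z : Matrix (Fin r) (Fin n) ℝ) (P : Matrix (Fin n) (Fin n) ℝ)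
    (hPsymm : Pᵀ = P) (hPidem : P * P = P)
    (hZtP : (Z * Dmat n) * P = Z * Dmat n)
    (hW0 : ∃ W₀ : Matrix (Fin p) (Fin r) ℝ, W₀ * (Z * Dmat n) = (Y * Dmat n) * P) :
    (⨅ W : Matrix (Fin p) (Fin r) ℝ, ⨅ b : Fin p → ℝ,
      (n : ℝ)⁻¹ * ∑ k, ∑ j, (W.mulVec (fun i => Z i k) j + b j - Y j k) ^ 2)
    = (n : ℝ)⁻¹ *
      (sqF (Y * Dmat n) - trace (P * ((Y * Dmat n)ᵀ * (Y * Dmat n)))) := by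
  have hn' : (n : ℝ) ≠ 0 := Nat.cast_ne_zero.mpr hn.ne'
  have hninv : (0:ℝ) ≤ (n : ℝ)⁻¹ := by positivity
  set Yt := Y * Dmat n with hYt
  set Zt := Z * Dmat n with hZt
  -- the constant
  have hc : sqF (Yt * (1 - P)) = sqF Yt - trace (P * (Ytᵀ * Yt)) := by
    have hs : (1 - P)ᵀ = 1 - P := by rw [transpose_sub, transpose_one, hPsymm]
    have hi : (1 - P) * (1 - P) = 1 - P := by
      rw [Matrix.sub_mul, Matrix.mul_sub, Matrix.mul_sub, Matrix.one_mul, Matrix.mul_one, hPidem]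
      simp [Matrix.one_mul]
    rw [sqF_eq_trace, sqF_eq_trace]
    have h2 : (Yt * (1 - P)) * (Yt * (1 - P))ᵀ = Yt * ((1 - P) * Ytᵀ) := by
      rw [transpose_mul, hs, Matrix.mul_assoc, ← Matrix.mul_assoc (1 - P) (1 - P), hi]
    rw [h2, Matrix.sub_mul, Matrix.one_mul, Matrix.mul_sub, trace_sub, ← Matrix.mul_assoc]
    congr 1
    rw [trace_mul_cycle, trace_mul_comm]
  -- the objective rewritten via sqF
  have hobj : ∀ (W : Matrix (Fin p) (Fin r) ℝ) (b : Fin p → ℝ),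
      (∑ k, ∑ j, (W.mulVec (fun i => Z i k) j + b j - Y j k) ^ 2)
      = sqF (Matrix.of fun j k => (W * Z) j k + b j - Y j k) := by
    intro W b
    rw [Finset.sum_comm]
    simp [sqF, Matrix.mulVec, Matrix.mul_apply, dotProduct]
  -- key: E * Dmat = A * Dmat where E j k = A j k + b j
  have hED : ∀ (A : Matrix (Fin p) (Fin n) ℝ) (b : Fin p → ℝ),
      (Matrix.of fun j k => A j k + b j) * Dmat n = A * Dmat n := by
    intro A b
    ext j k
    rw [mul_Dmat_apply, mul_Dmat_apply]
    simp only [Matrix.of_apply]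
    rw [Finset.sum_add_distrib, Finset.sum_const, Finset.card_univ, Fintype.card_fin,
      nsmul_eq_mul]
    field_simp
    ring
  -- lower bound
  have h1 : ∀ (W : Matrix (Fin p) (Fin r) ℝ) (b : Fin p → ℝ),
      (n : ℝ)⁻¹ * sqF (Yt * (1 - P)) ≤
      (n : ℝ)⁻¹ * ∑ k, ∑ j, (W.mulVec (fun i => Z i k) j + b j - Y j k) ^ 2 := by
    intro W b
    rw [hobj W b]
    apply mul_le_mul_of_nonneg_left _ hninv
    set E := Matrix.of fun j k => (W * Z) j k + b j - Y j k with hE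
    have hE' : E = Matrix.of fun j k => (W * Z - Y) j k + b j := by
      ext j k; simp [hE]; ring
    have hEDeq : E * Dmat n = W * Zt - Yt := by
      rw [hE', hED, Matrix.sub_mul, hZt, hYt, Matrix.mul_assoc]
    have step1 : sqF (E * Dmat n) ≤ sqF E := by
      rw [pythagoras E (Dmat n) (Dmat_symm n) (Dmat_idem hn)]
      nlinarith [sqF_nonneg (E * (1 - Dmat n))]
    have step2 : sqF (Yt * (1 - P)) ≤ sqF (E * Dmat n) := by
      rw [hEDeq, pythagoras (W * Zt - Yt) P hPsymm hPidem]
      have hzero : (W * Zt - Yt) * (1 - P) = -(Yt * (1 - P)) := by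
        rw [Matrix.sub_mul, Matrix.mul_sub, Matrix.mul_sub, Matrix.mul_one, Matrix.mul_one,
          Matrix.mul_assoc, hZtP]
        abel
      rw [hzero, sqF_neg]
      nlinarith [sqF_nonneg ((W * Zt - Yt) * P)]
    exact le_trans step2 step1
  -- attainment
  obtain ⟨W₀, hW₀⟩ := hW0
  have h2 : ∃ (W : Matrix (Fin p) (Fin r) ℝ) (b : Fin p → ℝ),
      (n : ℝ)⁻¹ * ∑ k, ∑ j, (W.mulVec (fun i => Z i k) j + b j - Y j k) ^ 2
      = (n : ℝ)⁻¹ * sqF (Yt * (1 - P)) := by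
    refine ⟨W₀, fun j => (n : ℝ)⁻¹ * ∑ l, (Y j l - (W₀ * Z) j l), ?_⟩
    rw [hobj]
    congr 1
    have hEeq : (Matrix.of fun j k => (W₀ * Z) j k +
        ((n : ℝ)⁻¹ * ∑ l, (Y j l - (W₀ * Z) j l)) - Y j k)
        = (W₀ * Z - Y) * Dmat n := by
      ext j k
      rw [mul_Dmat_apply]
      simp only [Matrix.of_apply, Matrix.sub_apply]
      simp only [Finset.sum_sub_distrib]
      ring
    calc sqF (Matrix.of fun j k => (W₀ * Z) j k +
          ((n : ℝ)⁻¹ * ∑ l, (Y j l - (W₀ * Z) j l)) - Y j k)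
        = sqF ((W₀ * Z - Y) * Dmat n) := by rw [hEeq]
      _ = sqF (W₀ * Zt - Yt) := by rw [Matrix.sub_mul, hZt, hYt, Matrix.mul_assoc]
      _ = sqF (-(Yt * (1 - P))) := by
          rw [hW₀, Matrix.mul_sub, Matrix.mul_one]; congr 1; abel
      _ = sqF (Yt * (1 - P)) := sqF_neg _
  rw [iInf_iInf_eq _ ((n : ℝ)⁻¹ * sqF (Yt * (1 - P))) h1 h2, hc]

lemma P_fix {n r : ℕ} (Zt : Matrix (Fin r) (Fin n) ℝ) (P : Matrix (Fin n) (Fin n) ℝ)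
    (hPsymm : Pᵀ = P) (hPidem : P * P = P)
    (hPrange : LinearMap.range P.mulVecLin = LinearMap.range Ztᵀ.mulVecLin) :
    Zt * P = Zt := by
  have hfix : ∀ x ∈ LinearMap.range Ztᵀ.mulVecLin, P.mulVec x = x := by
    intro x hx
    rw [← hPrange] at hx
    obtain ⟨u, hu⟩ := hx
    rw [← hu, Matrix.mulVecLin_apply, Matrix.mulVec_mulVec, hPidem]
  have key : P * Ztᵀ = Ztᵀ := by
    ext i j
    have hcol : P.mulVec (fun l => Ztᵀ l j) = (fun l => Ztᵀ l j) := by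
      apply hfix
      exact ⟨Pi.single j 1, by ext l; simp [Matrix.mulVecLin_apply]⟩
    calc (P * Ztᵀ) i j = P.mulVec (fun l => Ztᵀ l j) i := by
          simp [Matrix.mul_apply, Matrix.mulVec, dotProduct]
      _ = Ztᵀ i j := by rw [hcol]
  have h := congrArg Matrix.transpose key
  rwa [transpose_mul, transpose_transpose, hPsymm] at h

lemma exists_W {n r p : ℕ} (Zt : Matrix (Fin r) (Fin n) ℝ) (A : Matrix (Fin p) (Fin n) ℝ)
    (P : Matrix (Fin n) (Fin n) ℝ) (hPsymm : Pᵀ = P)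
    (hPrange : LinearMap.range P.mulVecLin = LinearMap.range Ztᵀ.mulVecLin) :
    ∃ W : Matrix (Fin p) (Fin r) ℝ, W * Zt = A * P := by
  have hP : ∀ l k, P l k = P k l := by
    intro l k
    conv_lhs => rw [← hPsymm]
    rfl
  have h : ∀ j : Fin p, ∃ v : Fin r → ℝ, Ztᵀ.mulVec v = P.mulVec (fun k => A j k) := by
    intro j
    have hm : P.mulVec (fun k => A j k) ∈ LinearMap.range Ztᵀ.mulVecLin := by
      rw [← hPrange]
      exact ⟨fun k => A j k, rfl⟩
    obtain ⟨v, hv⟩ := hm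
    exact ⟨v, hv⟩
  choose v hv using h
  refine ⟨Matrix.of (fun j i => v j i), ?_⟩
  ext j k
  have hvk := congrFun (hv j) k
  simp only [Matrix.mulVec, dotProduct] at hvk
  calc (Matrix.of (fun j i => v j i) * Zt) j k = ∑ i, v j i * Zt i k := by
        simp [Matrix.mul_apply]
    _ = ∑ i, Ztᵀ k i * v j i := by
        refine Finset.sum_congr rfl fun i _ => ?_
        rw [transpose_apply, mul_comm]
    _ = ∑ l, P k l * A j l := hvk
    _ = ∑ l, A j l * P l k := by
        refine Finset.sum_congr rfl fun l _ => ?_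
        rw [hP l k, mul_comm]
    _ = (A * P) j k := by rw [Matrix.mul_apply]

lemma trace_comb {n : ℕ} (P M N : Matrix (Fin n) (Fin n) ℝ) (a b : ℝ) :
    trace (P * (a • M - b • N)) = a * trace (P * M) - b * trace (P * N) := by
  rw [Matrix.mul_sub, Matrix.mul_smul, Matrix.mul_smul, trace_sub, trace_smul, trace_smul,
    smul_eq_mul, smul_eq_mul]

end ARLhelp
end

/-- For labels `Y ∈ ℝ^{p×n}`, `S ∈ ℝ^{q×n}`, centering matrix `D`, `Ỹ = YD`, `S̃ = SD`,
`λ ∈ [0,1]`, embedding `Z ∈ ℝ^{r×n}` with `Z̃ = ZD`, and `P` the orthogonal projection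
onto the row space of `Z̃`:
`(1-λ)·J_y(Z) - λ·J_s(Z) = (1/n)·[(1-λ)‖Ỹ‖_F² - λ‖S̃‖_F² + trace(P B)]`, where
`J_y(Z) = inf_{W,b} (1/n)Σₖ‖W zₖ + b - yₖ‖²` (and `J_s` analogously with `S`) and
`B = λ S̃ᵀS̃ - (1-λ) ỸᵀỸ`. -/
theorem arl_objective_via_projection {r n p q : ℕ} (hn : 0 < n)
    (Y : Matrix (Fin p) (Fin n) ℝ) (S : Matrix (Fin q) (Fin n) ℝ)
    (lam : ℝ) (hlam0 : 0 ≤ lam) (hlam1 : lam ≤ 1)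
    (Z : Matrix (Fin r) (Fin n) ℝ)
    (P : Matrix (Fin n) (Fin n) ℝ) (hPsymm : Pᵀ = P) (hPidem : P * P = P)
    (hPrange : LinearMap.range P.mulVecLin =
      LinearMap.range (Z * (1 - (n : ℝ)⁻¹ • Matrix.of (fun _ _ => (1 : ℝ))))ᵀ.mulVecLin) :
    let D : Matrix (Fin n) (Fin n) ℝ := 1 - (n : ℝ)⁻¹ • Matrix.of (fun _ _ => (1 : ℝ))
    let Yt : Matrix (Fin p) (Fin n) ℝ := Y * D
    let St : Matrix (Fin q) (Fin n) ℝ := S * D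
    let Jy : ℝ := ⨅ W : Matrix (Fin p) (Fin r) ℝ, ⨅ b : Fin p → ℝ,
      (n : ℝ)⁻¹ * ∑ k, ∑ j, (W.mulVec (fun i => Z i k) j + b j - Y j k) ^ 2
    let Js : ℝ := ⨅ W : Matrix (Fin q) (Fin r) ℝ, ⨅ b : Fin q → ℝ,
      (n : ℝ)⁻¹ * ∑ k, ∑ j, (W.mulVec (fun i => Z i k) j + b j - S j k) ^ 2
    let B : Matrix (Fin n) (Fin n) ℝ := lam • (Stᵀ * St) - (1 - lam) • (Ytᵀ * Yt)
    (1 - lam) * Jy - lam * Js =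
      (n : ℝ)⁻¹ * ((1 - lam) * (∑ j, ∑ k, (Yt j k) ^ 2) -
        lam * (∑ j, ∑ k, (St j k) ^ 2) + Matrix.trace (P * B)) := by
  intro D Yt St Jy Js B
  have hPrange' : LinearMap.range P.mulVecLin =
      LinearMap.range (Z * ARLhelp.Dmat n)ᵀ.mulVecLin := hPrange
  have hZtP := ARLhelp.P_fix (Z * ARLhelp.Dmat n) P hPsymm hPidem hPrange'
  have hWY := ARLhelp.exists_W (Z * ARLhelp.Dmat n) (Y * ARLhelp.Dmat n) P hPsymm hPrange'
  have hWS := ARLhelp.exists_W (Z * ARLhelp.Dmat n) (S * ARLhelp.Dmat n) P hPsymm hPrange'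
  have hJy : Jy = (n : ℝ)⁻¹ * (ARLhelp.sqF (Y * ARLhelp.Dmat n) -
      trace (P * ((Y * ARLhelp.Dmat n)ᵀ * (Y * ARLhelp.Dmat n)))) :=
    ARLhelp.J_formula hn Y Z P hPsymm hPidem hZtP hWY
  have hJs : Js = (n : ℝ)⁻¹ * (ARLhelp.sqF (S * ARLhelp.Dmat n) -
      trace (P * ((S * ARLhelp.Dmat n)ᵀ * (S * ARLhelp.Dmat n)))) :=
    ARLhelp.J_formula hn S Z P hPsymm hPidem hZtP hWS
  have hsY : (∑ j, ∑ k, (Yt j k) ^ 2) = ARLhelp.sqF (Y * ARLhelp.Dmat n) := rfl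
  have hsS : (∑ j, ∑ k, (St j k) ^ 2) = ARLhelp.sqF (S * ARLhelp.Dmat n) := rfl
  have hB : Matrix.trace (P * B) =
      lam * trace (P * ((S * ARLhelp.Dmat n)ᵀ * (S * ARLhelp.Dmat n))) -
      (1 - lam) * trace (P * ((Y * ARLhelp.Dmat n)ᵀ * (Y * ARLhelp.Dmat n))) := by
    have hBdef : B = lam • ((S * ARLhelp.Dmat n)ᵀ * (S * ARLhelp.Dmat n)) -
        (1 - lam) • ((Y * ARLhelp.Dmat n)ᵀ * (Y * ARLhelp.Dmat n)) := rfl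
    rw [hBdef, ARLhelp.trace_comb]
  rw [hJy, hJs, hsY, hsS, hB]
  ring
end

section
/- Let B ∈ ℝ^{n×n} be symmetric with eigenvalues μ_1 ≤ μ_2 ≤ … ≤ μ_n listed in nondecreasing order with multiplicity, and let 0 ≤ r ≤ n. Then the minimum over all symmetric idempotent matrices P ∈ ℝ^{n×n} (orthogonal projections) with rank(P) ≤ r of trace(P B) equals Σ_{i=1}^{r} min(μ_i, 0), and the minimum is attained. -/
/-!
Writing `B = U diag(μ) Uᵀ`, one has `trace (P B) = ∑ᵢ Qᵢᵢ μᵢ` with `Q = Uᵀ P U`, again a symmetric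
idempotent. Its diagonal entries lie in `[0, 1]` and sum to `trace Q = rank Q ≤ r`. For such
weights `∑ tᵢ μᵢ ≥ ∑ tᵢ min(μᵢ, 0) ≥ ∑_{i<r} min(μᵢ, 0)`: the sequence `min(μᵢ, 0)` is monotone
and nonpositive, so moving weight onto the first `r` indices only lowers the sum. The bound is
attained by `U D Uᵀ`, where `D` is the coordinate projection onto `{i < r | μᵢ ≤ 0}`.
-/

open Matrix

namespace Matrix

variable {m n R : Type*}

theorem trace_eq_rank_of_isIdempotentElem [Fintype m] [DecidableEq m] {K : Type*} [Field K]
    {P : Matrix m m K} (hP : IsIdempotentElem P) : P.trace = P.rank := by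
  have h : IsIdempotentElem (toLin' P) := hP.map (toLinAlgEquiv' : Matrix m m K ≃ₐ[K] _)
  rw [← trace_toLin'_eq, (LinearMap.IsIdempotentElem.isProj_range _ h).trace, rank,
    toLin'_apply']

theorem IsSymm.mul_mul_transpose [Fintype n] [CommSemiring R] {P : Matrix n n R}
    (hP : P.IsSymm) (U : Matrix m n R) : (U * P * Uᵀ).IsSymm := by
  simp only [IsSymm, transpose_mul, transpose_transpose, hP.eq, Matrix.mul_assoc]

theorem IsSymm.diag_mem_Icc_of_isIdempotentElem [Fintype n] [CommRing R] [LinearOrder R]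
    [IsStrictOrderedRing R] {P : Matrix n n R} (hs : P.IsSymm) (hi : IsIdempotentElem P)
    (i : n) : P i i ∈ Set.Icc 0 1 := by
  have hsq : P i i = ∑ j, P i j ^ 2 := by
    conv_lhs => rw [← hi.eq, mul_apply]
    simp only [hs.apply, sq]
  have hle : P i i ^ 2 ≤ P i i :=
    hsq ▸ Finset.single_le_sum (fun j _ => sq_nonneg (P i j)) (Finset.mem_univ i)
  have h0 : 0 ≤ P i i := hsq ▸ Finset.sum_nonneg fun j _ => sq_nonneg _
  exact ⟨h0, by nlinarith⟩

theorem trace_mul_mul_diagonal_mul_transpose [Fintype m] [Fintype n] [DecidableEq n]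
    [CommSemiring R] (A : Matrix m m R) (U : Matrix m n R) (μ : n → R) :
    (A * (U * diagonal μ * Uᵀ)).trace = ∑ i, (Uᵀ * A * U) i i * μ i := by
  rw [← Matrix.mul_assoc, ← Matrix.mul_assoc, trace_mul_cycle, ← Matrix.mul_assoc]
  simp [trace, mul_diagonal]

end Matrix

theorem IsIdempotentElem.mul_mul_of_mul_eq_one {M : Type*} [Monoid M] {P U V : M}
    (hP : IsIdempotentElem P) (h : V * U = 1) : IsIdempotentElem (U * P * V) := by
  rw [IsIdempotentElem, mul_assoc, mul_assoc, ← mul_assoc V, ← mul_assoc V, h, one_mul,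
    ← mul_assoc P, hP.eq, mul_assoc]

theorem Fin.map_castLEEmb_univ {n r : ℕ} (hr : r ≤ n) :
    Finset.univ.map (Fin.castLEEmb hr) = Finset.univ.filter (fun i : Fin n => (i : ℕ) < r) := by
  ext i
  simpa [Fin.castLEEmb] using ⟨fun ⟨a, h⟩ => h ▸ a.isLt, fun h => ⟨⟨i, h⟩, rfl⟩⟩

theorem Fin.sum_castLE {M : Type*} [AddCommMonoid M] {n r : ℕ} (hr : r ≤ n) (f : Fin n → M) :
    ∑ i : Fin r, f (Fin.castLE hr i) =
      ∑ i ∈ Finset.univ.filter (fun i : Fin n => (i : ℕ) < r), f i := by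
  rw [← Fin.map_castLEEmb_univ hr, Finset.sum_map]
  rfl

theorem exists_nonpos_threshold_of_monotone {R : Type*} [LinearOrder R] [Zero R] {n r : ℕ}
    {f : Fin n → R} (hf : Monotone f) (hf0 : ∀ i, f i ≤ 0) :
    ∃ c ≤ 0, (∀ i : Fin n, (i : ℕ) < r → f i ≤ c) ∧ ∀ i : Fin n, r ≤ (i : ℕ) → c ≤ f i := by
  by_cases h : r < n
  · exact ⟨f ⟨r, h⟩, hf0 _, fun i hi => hf hi.le, fun i hi => hf hi⟩
  · exact ⟨0, le_rfl, fun i _ => hf0 i, fun i hi => absurd i.isLt (by omega)⟩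

theorem sum_filter_lt_le_sum_mul_of_monotone {R : Type*} [CommRing R] [LinearOrder R]
    [IsStrictOrderedRing R] {n r : ℕ} (hr : r ≤ n) {f t : Fin n → R} (hf : Monotone f)
    (hf0 : ∀ i, f i ≤ 0) (ht : ∀ i, t i ∈ Set.Icc 0 1) (hsum : ∑ i, t i ≤ r) :
    ∑ i ∈ Finset.univ.filter (fun i : Fin n => (i : ℕ) < r), f i ≤ ∑ i, t i * f i := by
  obtain ⟨c, hc0, hlt, hge⟩ := exists_nonpos_threshold_of_monotone (r := r) hf hf0
  set s : Fin n → R := fun i => if (i : ℕ) < r then 1 else 0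
  have hs : ∑ i, s i = r := by
    rw [Finset.sum_boole, Fin.card_filter_val_lt, min_eq_right hr]
  have hpt : ∀ i, (s i - t i) * f i ≤ (s i - t i) * c := by
    intro i
    obtain ⟨ht0, ht1⟩ := ht i
    by_cases hi : (i : ℕ) < r
    · simp only [s, hi, if_true]
      exact mul_le_mul_of_nonneg_left (hlt i hi) (by linarith)
    · simp only [s, hi, if_false, zero_sub, neg_mul]
      exact neg_le_neg (mul_le_mul_of_nonneg_left (hge i (not_lt.mp hi)) ht0)
  calc ∑ i ∈ Finset.univ.filter (fun i : Fin n => (i : ℕ) < r), f i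
      = ∑ i, t i * f i + ∑ i, (s i - t i) * f i := by
        rw [Finset.sum_filter, ← Finset.sum_add_distrib]
        exact Finset.sum_congr rfl fun i _ => by simp only [s]; split_ifs <;> ring
    _ ≤ ∑ i, t i * f i + ∑ i, (s i - t i) * c :=
        add_le_add_right (Finset.sum_le_sum fun i _ => hpt i) _
    _ = ∑ i, t i * f i + (r - ∑ i, t i) * c := by
        rw [← Finset.sum_mul, Finset.sum_sub_distrib, hs]
    _ ≤ ∑ i, t i * f i := by
        have : 0 ≤ (r : R) - ∑ i, t i := sub_nonneg.mpr hsum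
        nlinarith

section Projection

variable {R : Type*} [Field R] [LinearOrder R] [IsStrictOrderedRing R] {n r : ℕ}

theorem sum_min_zero_le_trace_mul_of_isIdempotentElem (hr : r ≤ n) {μ : Fin n → R}
    (hμ : Monotone μ) {U : Matrix (Fin n) (Fin n) R} (hU : Uᵀ * U = 1)
    {P : Matrix (Fin n) (Fin n) R} (hPs : P.IsSymm) (hPi : IsIdempotentElem P)
    (hPr : P.rank ≤ r) :
    ∑ i : Fin r, min (μ (Fin.castLE hr i)) 0 ≤ (P * (U * diagonal μ * Uᵀ)).trace := by
  set Q := Uᵀ * P * U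
  have hQs : Q.IsSymm := by simpa using IsSymm.mul_mul_transpose hPs Uᵀ
  have hQi : IsIdempotentElem Q := hPi.mul_mul_of_mul_eq_one (mul_eq_one_comm.mp hU)
  have hQtr : ∑ i, Q i i ≤ r := calc
    ∑ i, Q i i = Q.rank := trace_eq_rank_of_isIdempotentElem hQi
    _ ≤ r := by
      exact_mod_cast ((rank_mul_le_left _ _).trans (rank_mul_le_right _ _)).trans hPr
  have hdiag := hQs.diag_mem_Icc_of_isIdempotentElem hQi
  rw [trace_mul_mul_diagonal_mul_transpose, Fin.sum_castLE hr fun i => min (μ i) 0]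
  calc _ ≤ ∑ i, Q i i * min (μ i) 0 :=
        sum_filter_lt_le_sum_mul_of_monotone hr (fun i j hij => min_le_min_right 0 (hμ hij))
          (fun i => min_le_right _ _) hdiag hQtr
    _ ≤ ∑ i, Q i i * μ i :=
        Finset.sum_le_sum fun i _ => mul_le_mul_of_nonneg_left (min_le_left _ _) (hdiag i).1

theorem exists_isIdempotentElem_trace_mul_eq_sum_min_zero (hr : r ≤ n) (μ : Fin n → R)
    {U : Matrix (Fin n) (Fin n) R} (hU : Uᵀ * U = 1) :
    ∃ P : Matrix (Fin n) (Fin n) R, P.IsSymm ∧ IsIdempotentElem P ∧ P.rank ≤ r ∧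
      (P * (U * diagonal μ * Uᵀ)).trace = ∑ i : Fin r, min (μ (Fin.castLE hr i)) 0 := by
  classical
  set d : Fin n → R := fun i => if (i : ℕ) < r ∧ μ i ≤ 0 then 1 else 0
  have hD : IsIdempotentElem (diagonal d) := by
    rw [IsIdempotentElem, diagonal_mul_diagonal]
    congr 1
    ext i
    simp only [d]
    split_ifs <;> simp
  have hDr : (diagonal d).rank ≤ r := by
    rw [rank_diagonal, Fintype.card_subtype]
    calc _ ≤ (Finset.univ.filter fun i : Fin n => (i : ℕ) < r).card :=
          Finset.card_le_card fun i => by simp [d]; tauto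
      _ = r := by rw [Fin.card_filter_val_lt, min_eq_right hr]
  have hconj : Uᵀ * (U * diagonal d * Uᵀ) * U = diagonal d := by
    simp only [← Matrix.mul_assoc, hU, Matrix.one_mul]
    rw [Matrix.mul_assoc, hU, Matrix.mul_one]
  refine ⟨U * diagonal d * Uᵀ, IsSymm.mul_mul_transpose (isSymm_diagonal d) U,
    hD.mul_mul_of_mul_eq_one hU,
    ((rank_mul_le_left _ _).trans (rank_mul_le_right _ _)).trans hDr, ?_⟩
  rw [trace_mul_mul_diagonal_mul_transpose, hconj, Fin.sum_castLE hr fun i => min (μ i) 0,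
    Finset.sum_filter]
  refine Finset.sum_congr rfl fun i _ => ?_
  simp only [diagonal_apply_eq, d, min_def]
  split_ifs <;> simp_all

end Projection

theorem min_trace_proj_rank_le_general {n : ℕ} (B : Matrix (Fin n) (Fin n) ℝ)
    (μ : Fin n → ℝ) (hμ : Monotone μ)
    (U : Matrix (Fin n) (Fin n) ℝ) (hU : Uᵀ * U = 1)
    (hdiag : B = U * Matrix.diagonal μ * Uᵀ)
    (r : ℕ) (hr : r ≤ n) :
    IsLeast
      {t : ℝ | ∃ P : Matrix (Fin n) (Fin n) ℝ,
        Pᵀ = P ∧ P * P = P ∧ P.rank ≤ r ∧ t = Matrix.trace (P * B)}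
      (∑ i : Fin r, min (μ (Fin.castLE hr i)) 0) := by
  subst hdiag
  refine ⟨?_, ?_⟩
  · obtain ⟨P, hPs, hPi, hPr, htr⟩ := exists_isIdempotentElem_trace_mul_eq_sum_min_zero hr μ hU
    exact ⟨P, hPs, hPi, hPr, htr.symm⟩
  · rintro _ ⟨P, hPs, hPi, hPr, rfl⟩
    exact sum_min_zero_le_trace_mul_of_isIdempotentElem hr hμ hU hPs hPi hPr

/-- For a real symmetric `B ∈ ℝ^{n×n}` with eigenvalues `μ₁ ≤ … ≤ μₙ` (listed
nondecreasing with multiplicity, via an orthogonal diagonalization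
`B = U diag(μ) Uᵀ`) and `0 ≤ r ≤ n`: the minimum of `trace(PB)` over all symmetric
idempotent `P` with `rank P ≤ r` equals `Σ_{i=1}^r min(μᵢ, 0)`, and it is attained. -/
theorem min_trace_proj_rank_le {n : ℕ} (B : Matrix (Fin n) (Fin n) ℝ)
    (hB : B.IsSymm) (μ : Fin n → ℝ) (hμ : Monotone μ)
    (U : Matrix (Fin n) (Fin n) ℝ) (hU : Uᵀ * U = 1)
    (hdiag : B = U * Matrix.diagonal μ * Uᵀ)
    (r : ℕ) (hr : r ≤ n) :
    IsLeast
      {t : ℝ | ∃ P : Matrix (Fin n) (Fin n) ℝ,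
        Pᵀ = P ∧ P * P = P ∧ P.rank ≤ r ∧ t = Matrix.trace (P * B)}
      (∑ i : Fin r, min (μ (Fin.castLE hr i)) 0) :=
  min_trace_proj_rank_le_general B μ hμ U hU hdiag r hr
end

section
/- (Theorem 2.) Let Y ∈ ℝ^{p×n} and S ∈ ℝ^{q×n}, let D = I_n − (1/n)·1_n 1_nᵀ, Ỹ = Y D, S̃ = S D, and let λ ∈ [0,1]. For each integer r ≥ 1 and Z ∈ ℝ^{r×n}, let J_y(Z) be the infimum over W ∈ ℝ^{p×r}, b ∈ ℝ^p of (1/n)Σ_{k=1}^n ‖W z_k + b − y_k‖², and define J_s(Z) analogously with S in place of Y; define L(r) = inf over Z ∈ ℝ^{r×n} of (1−λ)·J_y(Z) − λ·J_s(Z). Let B = λ·S̃ᵀS̃ − (1−λ)·ỸᵀỸ and let n⁻ be the number of negative eigenvalues of B counted with multiplicity. Then L(r) = L(n⁻) for every r ≥ n⁻, and L(r) > L(n⁻) for every 1 ≤ r < n⁻; in particular, n⁻ is the smallest embedding dimensionality r achieving the minimum of L over all r. -/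
open Matrix

/-- Minimum MSE of a linear regressor (with bias) predicting the columns of
`S ∈ ℝ^{q×n}` from those of the embedding `Z ∈ ℝ^{r×n}`. -/
noncomputable def Jmse {q n : ℕ} (r : ℕ) (S : Matrix (Fin q) (Fin n) ℝ)
    (Z : Matrix (Fin r) (Fin n) ℝ) : ℝ :=
  ⨅ W : Matrix (Fin q) (Fin r) ℝ, ⨅ b : Fin q → ℝ,
    (n : ℝ)⁻¹ * ∑ k, ∑ j, (W.mulVec (fun i => Z i k) j + b j - S j k) ^ 2

/-- Optimal value of the Lagrangian ARL objective at embedding dimensionality `r`,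
the embedding being a free matrix `Z ∈ ℝ^{r×n}`. -/
noncomputable def arlOpt {p q n : ℕ} (Y : Matrix (Fin p) (Fin n) ℝ)
    (S : Matrix (Fin q) (Fin n) ℝ) (lam : ℝ) (r : ℕ) : ℝ :=
  ⨅ Z : Matrix (Fin r) (Fin n) ℝ, ((1 - lam) * Jmse r Y Z - lam * Jmse r S Z)

/-!
For a fixed embedding `Z`, the best regressor (with bias) projects the centered labels onto the
row space of the centered embedding `Z D`: if `P` is the orthogonal projection onto that row space,
then `J_s(Z) = n⁻¹ tr(S̃ᵀ S̃ (1 - P))`, and likewise for `Y`. Hence the objective equals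
`n⁻¹ (tr(B P) - tr B)`, and `P` has rank at most `r`. Writing `B = U diag(μ) Uᵀ`, the diagonal
`t` of `Uᵀ P U` lies in `[0, 1]` with `∑ t ≤ r`, so `tr(B P) = ∑ μ_j t_j` is at least the sum of
the `min(r, n⁻)` smallest (negative) eigenvalues. This bound is attained by the projection onto
their eigenvectors, which are orthogonal to the constant vector because `B 1 = 0`, so they are
realised by an embedding. The sum of the `min(r, n⁻)` negative eigenvalues strictly decreases
until `r = n⁻` and is constant afterwards.
-/

open Finset

namespace Matrix

variable {m n : Type*} [Fintype m] [Fintype n]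

theorem IsIdempotentElem.trace_eq_rank [DecidableEq n] {K : Type*} [Field K]
    {P : Matrix n n K} (hP : IsIdempotentElem P) : P.trace = P.rank := by
  have h : IsIdempotentElem (toLin' P) := hP.map (toLinAlgEquiv' (R := K))
  rw [← Matrix.trace_toLin'_eq, (LinearMap.IsIdempotentElem.isProj_range _ h).trace]
  rfl

theorem trace_le_card_of_isIdempotentElem_mul [DecidableEq n] {K : Type*} [Field K]
    {X : Matrix n m K} {M : Matrix m n K} [LinearOrder K] [IsStrictOrderedRing K]
    (h : IsIdempotentElem (X * M)) : (X * M).trace ≤ Fintype.card m := by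
  rw [IsIdempotentElem.trace_eq_rank h, Nat.cast_le]
  exact (rank_mul_le_right X M).trans (rank_le_card_height M)

theorem IsStarProjection.transpose_eq {P : Matrix n n ℝ} (hP : IsStarProjection P) : Pᵀ = P := by
  simpa [star_eq_conjTranspose] using hP.isSelfAdjoint.star_eq

theorem trace_self_mul_transpose_nonneg (A : Matrix m n ℝ) : 0 ≤ (A * Aᵀ).trace := by
  have h := posSemidef_self_mul_conjTranspose A
  rw [conjTranspose_eq_transpose_of_trivial] at h
  exact h.trace_nonneg

theorem trace_mul_mul_transpose_eq {Q : Matrix n n ℝ} (hQ : IsStarProjection Q)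
    (A : Matrix m n ℝ) : (A * Q * (A * Q)ᵀ).trace = (Aᵀ * A * Q).trace := by
  rw [transpose_mul, hQ.transpose_eq, ← Matrix.mul_assoc, Matrix.mul_assoc A Q Q,
    hQ.isIdempotentElem.eq, trace_mul_cycle]

theorem trace_mul_mul_transpose_le [DecidableEq n] {Q : Matrix n n ℝ} (hQ : IsStarProjection Q)
    (A : Matrix m n ℝ) : (A * Q * (A * Q)ᵀ).trace ≤ (A * Aᵀ).trace := by
  have hsplit : (A * Aᵀ).trace =
      (A * Q * (A * Q)ᵀ).trace + (A * (1 - Q) * (A * (1 - Q))ᵀ).trace := by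
    rw [trace_mul_mul_transpose_eq hQ, trace_mul_mul_transpose_eq hQ.one_sub, ← trace_add,
      ← Matrix.mul_add, add_sub_cancel, Matrix.mul_one, trace_mul_comm]
  linarith [trace_self_mul_transpose_nonneg (A * (1 - Q))]

/-- `X * M` is the orthogonal projection onto the row space of `M`: with `G = Mᴴ * M`, it is
`G⁺ * G` for the pseudo-inverse `G⁺` obtained from `x ↦ x⁻¹` by functional calculus
(using `0⁻¹ = 0`). -/
theorem exists_isStarProjection_mul_eq [DecidableEq n] (M : Matrix m n ℝ) :
    ∃ X : Matrix n m ℝ, IsStarProjection (X * M) ∧ M * (X * M) = M := by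
  set G := Mᴴ * M
  have hG : IsSelfAdjoint G := (isHermitian_conjTranspose_mul_self M).isSelfAdjoint
  have hc : ∀ f : ℝ → ℝ, ContinuousOn f (spectrum ℝ G) :=
    fun f => (finite_real_spectrum (A := G)).continuousOn f
  have hmul : ∀ f : ℝ → ℝ, cfc f G * G = cfc (fun x => f x * x) G := fun f => by
    conv_lhs => arg 2; rw [← cfc_id' ℝ G]
    rw [← cfc_mul _ _ G (hc _) (hc _)]
  have hP : IsStarProjection (cfc (fun x : ℝ => x⁻¹ * x) G) := by
    refine ⟨?_, IsSelfAdjoint.cfc⟩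
    rw [IsIdempotentElem, ← cfc_mul _ _ G (hc _) (hc _)]
    exact cfc_congr fun x _ => by by_cases hx : x = 0 <;> simp [hx]
  have hPG : cfc (fun x : ℝ => x⁻¹ * x) G * G = G := by
    rw [hmul]
    conv_rhs => rw [← cfc_id' ℝ G]
    exact cfc_congr fun x _ => by by_cases hx : x = 0 <;> simp [hx]
  have hMP : M * cfc (fun x : ℝ => x⁻¹ * x) G = M := by
    have h := congrArg conjTranspose <|
      (mul_conjTranspose_mul_self_eq_zero M (1 - cfc (fun x : ℝ => x⁻¹ * x) G)).1
        (by rw [Matrix.sub_mul, Matrix.one_mul, hPG, sub_self])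
    rwa [conjTranspose_mul, conjTranspose_sub, conjTranspose_one, conjTranspose_conjTranspose,
      ← star_eq_conjTranspose, hP.isSelfAdjoint.star_eq, conjTranspose_zero, Matrix.mul_sub,
      Matrix.mul_one, sub_eq_zero, eq_comm] at h
  have hXM : cfc (fun x : ℝ => x⁻¹) G * Mᴴ * M = cfc (fun x : ℝ => x⁻¹ * x) G := by
    rw [Matrix.mul_assoc, hmul]
  exact ⟨cfc (fun x : ℝ => x⁻¹) G * Mᴴ, hXM ▸ hP, by rw [hXM, hMP]⟩

theorem diag_transpose_mul_mul_nonneg {Q : Matrix n n ℝ} (hQ : IsStarProjection Q)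
    (U : Matrix n m ℝ) (i : m) : 0 ≤ (Uᵀ * Q * U) i i := by
  have h := posSemidef_conjTranspose_mul_self (Q * U)
  rw [conjTranspose_eq_transpose_of_trivial, transpose_mul, hQ.transpose_eq, Matrix.mul_assoc,
    ← Matrix.mul_assoc Q, hQ.isIdempotentElem.eq, ← Matrix.mul_assoc] at h
  exact h.diag_nonneg

theorem diag_transpose_mul_mul_le_one [DecidableEq n] [DecidableEq m] {Q : Matrix n n ℝ}
    (hQ : IsStarProjection Q) {U : Matrix n m ℝ} (hU : Uᵀ * U = 1) (i : m) :
    (Uᵀ * Q * U) i i ≤ 1 := by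
  have h := diag_transpose_mul_mul_nonneg hQ.one_sub U i
  rw [Matrix.mul_sub, Matrix.sub_mul, Matrix.mul_one, hU, sub_apply, one_apply_eq] at h
  linarith

theorem transpose_mulVec_apply_eq_zero [DecidableEq n] {B U : Matrix n n ℝ} {μ : n → ℝ}
    (hU : Uᵀ * U = 1) (hdiag : B = U * diagonal μ * Uᵀ)
    {v : n → ℝ} (hv : B *ᵥ v = 0) {j : n} (hj : μ j ≠ 0) : (Uᵀ *ᵥ v) j = 0 := by
  have h : diagonal μ *ᵥ (Uᵀ *ᵥ v) = 0 := by
    rw [mulVec_mulVec, ← Matrix.one_mul (diagonal μ), ← hU, Matrix.mul_assoc, Matrix.mul_assoc,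
      ← Matrix.mul_assoc U, ← hdiag, ← mulVec_mulVec, hv, mulVec_zero]
  simpa [mulVec_diagonal, hj] using congrFun h j

end Matrix

theorem Finset.sum_add_mul_sub_card_le_sum_mul {ι : Type*} [Fintype ι] [DecidableEq ι]
    (s : Finset ι) {μ t : ι → ℝ} {c : ℝ} (hs : ∀ i ∈ s, μ i ≤ c) (hsc : ∀ i ∉ s, c ≤ μ i)
    (ht0 : ∀ i, 0 ≤ t i) (ht1 : ∀ i, t i ≤ 1) :
    ∑ i ∈ s, μ i + c * (∑ i, t i - #s) ≤ ∑ i, μ i * t i := by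
  have hterm : ∀ i, 0 ≤ (μ i - c) * (t i - if i ∈ s then 1 else 0) := fun i => by
    by_cases hi : i ∈ s
    · simpa [hi] using
        mul_nonneg_of_nonpos_of_nonpos (sub_nonpos.2 (hs i hi)) (sub_nonpos.2 (ht1 i))
    · simpa [hi] using mul_nonneg (sub_nonneg.2 (hsc i hi)) (ht0 i)
  have hexpand : ∑ i, (μ i - c) * (t i - if i ∈ s then 1 else 0) =
      ∑ i, μ i * t i - c * ∑ i, t i - ∑ i ∈ s, μ i + c * #s := by
    simp only [mul_sub, sub_mul, sum_sub_distrib, mul_ite, mul_one, mul_zero, sum_ite_mem,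
      univ_inter, ← mul_sum, sum_const, nsmul_eq_mul]
    ring
  linarith [sum_nonneg fun i (_ : i ∈ univ) => hterm i]

theorem Fin.sum_lt_min_le_sum_mul {n : ℕ} {μ : Fin n → ℝ} (hμ : Monotone μ) {k : ℕ}
    (hk : ∀ j, μ j < 0 ↔ (j : ℕ) < k) {t : Fin n → ℝ} (ht0 : ∀ j, 0 ≤ t j)
    (ht1 : ∀ j, t j ≤ 1) {r : ℕ} (htr : ∑ j, t j ≤ r) :
    ∑ j with j.val < min r k, μ j ≤ ∑ j, μ j * t j := by
  -- the threshold `c` between the values summed and the others: `μ r` if it is negative, else `0`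
  by_cases hr : r < k ∧ r < n
  · set c := μ ⟨r, hr.2⟩
    have hc : c < 0 := (hk _).2 hr.1
    have h := sum_add_mul_sub_card_le_sum_mul (univ.filter fun j : Fin n => (j : ℕ) < min r k)
      (μ := μ) (c := c) (fun j hj => hμ ?_) (fun j hj => hμ ?_) ht0 ht1
    · rw [min_eq_left hr.1.le] at h ⊢
      rw [Fin.card_filter_val_lt, min_eq_right hr.2.le] at h
      nlinarith
    · simp only [mem_filter, mem_univ, true_and] at hj
      exact Fin.le_def.2 (by simp only; omega)
    · simp only [mem_filter, mem_univ, true_and, not_lt] at hj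
      exact Fin.le_def.2 (by simp only; omega)
  · have h := sum_add_mul_sub_card_le_sum_mul (univ.filter fun j : Fin n => (j : ℕ) < min r k)
      (μ := μ) (c := 0) (fun j hj => ?_) (fun j hj => ?_) ht0 ht1
    · simpa using h
    · simp only [mem_filter, mem_univ, true_and] at hj
      exact ((hk j).2 (by omega)).le
    · simp only [mem_filter, mem_univ, true_and] at hj
      by_contra hneg
      have hjk := (hk j).1 (not_le.1 hneg)
      omega

theorem Monotone.lt_iff_lt_card_filter_lt {α : Type*} [Preorder α] [DecidableLT α] {n : ℕ}
    {μ : Fin n → α} (hμ : Monotone μ) (a : α) (j : Fin n) : μ j < a ↔ (j : ℕ) < #{i | μ i < a} := by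
  constructor
  · intro hj
    have h := card_le_card fun i (hi : i ∈ Iic j) =>
      mem_filter.2 ⟨mem_univ i, (hμ (mem_Iic.1 hi)).trans_lt hj⟩
    rw [Fin.card_Iic] at h
    omega
  · intro hj
    by_contra hja
    have h := card_le_card fun i (hi : i ∈ ({i | μ i < a} : Finset (Fin n))) =>
      mem_Iio.2 (lt_of_not_ge fun hji => hja ((hμ hji).trans_lt (mem_filter.1 hi).2))
    rw [Fin.card_Iio] at h
    omega

theorem Fin.sum_val_lt_lt_sum_val_lt {n : ℕ} {μ : Fin n → ℝ} {k r : ℕ}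
    (hμ : ∀ j : Fin n, (j : ℕ) < k → μ j < 0) (hr : r < k) (hk : k ≤ n) :
    ∑ j with j.val < k, μ j < ∑ j with j.val < r, μ j := by
  have h := sum_lt_sum_of_subset (f := fun j => -μ j)
    (s := {j : Fin n | j.val < r}) (t := {j : Fin n | j.val < k})
    (fun j hj => by simp only [mem_filter, mem_univ, true_and] at hj ⊢; omega)
    (i := ⟨r, by omega⟩) (by simpa using hr) (by simp)
    (neg_pos.2 (hμ _ hr)) (fun j hj _ => (neg_pos.2 (hμ j (by simpa using hj))).le)
  simp only [sum_neg_distrib] at h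
  linarith

namespace Matrix

theorem sum_lt_min_le_trace_mul {n : ℕ} {μ : Fin n → ℝ} (hμ : Monotone μ) {k : ℕ}
    (hk : ∀ j, μ j < 0 ↔ (j : ℕ) < k) {U : Matrix (Fin n) (Fin n) ℝ} (hU : Uᵀ * U = 1)
    {P : Matrix (Fin n) (Fin n) ℝ} (hP : IsStarProjection P) {r : ℕ} (htr : P.trace ≤ r) :
    ∑ j with j.val < min r k, μ j ≤ (U * diagonal μ * Uᵀ * P).trace := by
  have htrace : (U * diagonal μ * Uᵀ * P).trace = ∑ j, μ j * (Uᵀ * P * U) j j := by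
    rw [Matrix.mul_assoc, Matrix.mul_assoc, trace_mul_comm, Matrix.mul_assoc, trace,
      ← Matrix.mul_assoc, ← Matrix.mul_assoc]
    simp only [diag_apply, Matrix.mul_assoc, diagonal_mul]
  have hdiag : ∑ j, (Uᵀ * P * U) j j = P.trace := by
    change (Uᵀ * P * U).trace = P.trace
    rw [trace_mul_comm, ← Matrix.mul_assoc, mul_eq_one_comm.1 hU, Matrix.one_mul]
  rw [htrace]
  exact Fin.sum_lt_min_le_sum_mul hμ hk (diag_transpose_mul_mul_nonneg hP U)
    (diag_transpose_mul_mul_le_one hP hU) (hdiag ▸ htr)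

end Matrix

noncomputable section

def centering (n : ℕ) : Matrix (Fin n) (Fin n) ℝ := 1 - (n : ℝ)⁻¹ • of fun _ _ => 1

section Centering

variable {m : Type*} {n : ℕ}

theorem mul_centering (A : Matrix m (Fin n) ℝ) :
    A * centering n = A - replicateCol (Fin n) fun i => (n : ℝ)⁻¹ * ∑ k, A i k := by
  rw [centering, Matrix.mul_sub, Matrix.mul_one, Matrix.mul_smul]
  ext i j
  simp [mul_apply, mul_comm]

theorem mul_centering_eq_self {A : Matrix m (Fin n) ℝ} (h : A *ᵥ 1 = 0) :
    A * centering n = A := by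
  have hrow : ∀ i, ∑ k, A i k = 0 := fun i => by simpa [mulVec, dotProduct] using congrFun h i
  ext i j
  simp [mul_centering, hrow]

theorem centering_mulVec_one (hn : 0 < n) : centering n *ᵥ 1 = 0 := by
  ext i
  simp [centering, mulVec, dotProduct, one_apply, (Nat.cast_pos.2 hn).ne']

theorem replicateCol_mul_centering (hn : 0 < n) (b : m → ℝ) :
    replicateCol (Fin n) b * centering n = 0 := by
  ext i j
  simp [mul_centering, (Nat.cast_pos.2 hn).ne']

theorem isStarProjection_centering (hn : 0 < n) : IsStarProjection (centering n) where
  isIdempotentElem := mul_centering_eq_self (centering_mulVec_one hn)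
  isSelfAdjoint := by
    simp [IsSelfAdjoint, centering, star_eq_conjTranspose, conjTranspose_eq_transpose_of_trivial]
    rfl

end Centering

section Regression

variable {q n r : ℕ}

def regressionResidual (S : Matrix (Fin q) (Fin n) ℝ) (Z : Matrix (Fin r) (Fin n) ℝ)
    (W : Matrix (Fin q) (Fin r) ℝ) (b : Fin q → ℝ) : Matrix (Fin q) (Fin n) ℝ :=
  W * Z + replicateCol (Fin n) b - S

theorem Jmse_eq_iInf_trace (S : Matrix (Fin q) (Fin n) ℝ) (Z : Matrix (Fin r) (Fin n) ℝ) :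
    Jmse r S Z = ⨅ (W : Matrix (Fin q) (Fin r) ℝ) (b : Fin q → ℝ),
      (n : ℝ)⁻¹ * (regressionResidual S Z W b * (regressionResidual S Z W b)ᵀ).trace := by
  refine iInf_congr fun W => iInf_congr fun b => congrArg _ ?_
  rw [Finset.sum_comm]
  simp [regressionResidual, trace, mul_apply, mulVec, dotProduct, sq, mul_comm]

theorem Jmse_le (S : Matrix (Fin q) (Fin n) ℝ) (Z : Matrix (Fin r) (Fin n) ℝ)
    (W : Matrix (Fin q) (Fin r) ℝ) (b : Fin q → ℝ) :
    Jmse r S Z ≤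
      (n : ℝ)⁻¹ * (regressionResidual S Z W b * (regressionResidual S Z W b)ᵀ).trace := by
  have hnonneg : ∀ W b, 0 ≤ (n : ℝ)⁻¹ *
      (regressionResidual S Z W b * (regressionResidual S Z W b)ᵀ).trace :=
    fun W b => mul_nonneg (by positivity) (trace_self_mul_transpose_nonneg _)
  rw [Jmse_eq_iInf_trace]
  refine (ciInf_le ⟨0, ?_⟩ W).trans (ciInf_le ⟨0, ?_⟩ b)
  · rintro _ ⟨W', rfl⟩
    exact le_ciInf (hnonneg W')
  · rintro _ ⟨b', rfl⟩
    exact hnonneg W b'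

/-- The regressor `W = S̃ X` fits `S̃ P`, and no regressor does better because its residual,
projected away from the constants and the row space of `Z * centering n`, is `-S̃ (1 - P)`. -/
theorem Jmse_eq (hn : 0 < n) (S : Matrix (Fin q) (Fin n) ℝ) (Z : Matrix (Fin r) (Fin n) ℝ)
    {X : Matrix (Fin n) (Fin r) ℝ} {P : Matrix (Fin n) (Fin n) ℝ} (hP : IsStarProjection P)
    (hXP : X * (Z * centering n) = P) (hZP : Z * centering n * P = Z * centering n) :
    Jmse r S Z =
      (n : ℝ)⁻¹ * ((S * centering n)ᵀ * (S * centering n) * (1 - P)).trace := by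
  set D := centering n
  have hval : ∀ {E : Matrix (Fin q) (Fin n) ℝ}, E = -(S * D * (1 - P)) →
      (E * Eᵀ).trace = ((S * D)ᵀ * (S * D) * (1 - P)).trace := fun hE => by
    rw [hE, transpose_neg, Matrix.neg_mul, Matrix.mul_neg, neg_neg,
      trace_mul_mul_transpose_eq hP.one_sub]
  apply le_antisymm
  · set W := S * D * X
    have hfit : regressionResidual S Z W (fun i => -((n : ℝ)⁻¹ * ∑ k, (W * Z - S) i k)) =
        -(S * D * (1 - P)) :=
      calc _ = (W * Z - S) * D := by
            rw [mul_centering]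
            ext i j
            simp [regressionResidual]
            ring
        _ = S * D * (X * (Z * D)) - S * D := by
            rw [Matrix.sub_mul, Matrix.mul_assoc W, Matrix.mul_assoc]
        _ = -(S * D * (1 - P)) := by rw [hXP, Matrix.mul_sub, Matrix.mul_one, neg_sub]
    exact (Jmse_le S Z W _).trans_eq (by rw [hval hfit])
  · rw [Jmse_eq_iInf_trace]
    refine le_ciInf fun W => le_ciInf fun b => mul_le_mul_of_nonneg_left ?_ (by positivity)
    have hres : regressionResidual S Z W b * D * (1 - P) = -(S * D * (1 - P)) := by
      rw [regressionResidual, Matrix.sub_mul, Matrix.add_mul, replicateCol_mul_centering hn,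
        add_zero, Matrix.mul_assoc W, Matrix.sub_mul, Matrix.mul_assoc W, Matrix.mul_sub,
        Matrix.mul_one, hZP, sub_self, Matrix.mul_zero, zero_sub]
    rw [← hval hres]
    exact (trace_mul_mul_transpose_le hP.one_sub _).trans
      (trace_mul_mul_transpose_le (isStarProjection_centering hn) _)

end Regression

section Selection

variable {r n m : ℕ}

def selectionMatrix (r n m : ℕ) : Matrix (Fin r) (Fin n) ℝ :=
  of fun i j => if (i : ℕ) = j ∧ (j : ℕ) < m then 1 else 0

theorem transpose_selectionMatrix_mul (hm : m ≤ r) :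
    (selectionMatrix r n m)ᵀ * selectionMatrix r n m =
      diagonal fun j : Fin n => if (j : ℕ) < m then 1 else 0 := by
  ext j j'
  by_cases hj : (j : ℕ) < m
  · rw [mul_apply, Fintype.sum_eq_single ⟨j, by omega⟩]
    · by_cases hjj : j = j' <;> simp [selectionMatrix, diagonal, hjj, hj, Fin.val_eq_val]
    · intro i hi
      simp [selectionMatrix, Fin.ext_iff] at hi ⊢
      omega
  · simp [selectionMatrix, mul_apply, diagonal, hj]

theorem selectionMatrix_mul_diagonal :
    selectionMatrix r n m * diagonal (fun j : Fin n => if (j : ℕ) < m then (1 : ℝ) else 0) =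
      selectionMatrix r n m := by
  ext i j
  by_cases hj : (j : ℕ) < m <;> simp [selectionMatrix, mul_diagonal, hj]

end Selection

section ARL

variable {p q n : ℕ}

def arlMatrix (Y : Matrix (Fin p) (Fin n) ℝ) (S : Matrix (Fin q) (Fin n) ℝ) (lam : ℝ) :
    Matrix (Fin n) (Fin n) ℝ :=
  lam • ((S * centering n)ᵀ * (S * centering n)) -
    (1 - lam) • ((Y * centering n)ᵀ * (Y * centering n))

def arlObjective (Y : Matrix (Fin p) (Fin n) ℝ) (S : Matrix (Fin q) (Fin n) ℝ) (lam : ℝ) {r : ℕ}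
    (Z : Matrix (Fin r) (Fin n) ℝ) : ℝ :=
  (1 - lam) * Jmse r Y Z - lam * Jmse r S Z

theorem arlMatrix_mulVec_one (hn : 0 < n) (Y : Matrix (Fin p) (Fin n) ℝ)
    (S : Matrix (Fin q) (Fin n) ℝ) (lam : ℝ) : arlMatrix Y S lam *ᵥ 1 = 0 := by
  simp [arlMatrix, sub_mulVec, smul_mulVec, ← mulVec_mulVec, centering_mulVec_one hn]

theorem arlObjective_eq (hn : 0 < n) (Y : Matrix (Fin p) (Fin n) ℝ)
    (S : Matrix (Fin q) (Fin n) ℝ) (lam : ℝ) {r : ℕ} (Z : Matrix (Fin r) (Fin n) ℝ)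
    {X : Matrix (Fin n) (Fin r) ℝ} {P : Matrix (Fin n) (Fin n) ℝ} (hP : IsStarProjection P)
    (hXP : X * (Z * centering n) = P) (hZP : Z * centering n * P = Z * centering n) :
    arlObjective Y S lam Z =
      (n : ℝ)⁻¹ * ((arlMatrix Y S lam * P).trace - (arlMatrix Y S lam).trace) := by
  rw [arlObjective, Jmse_eq hn Y Z hP hXP hZP, Jmse_eq hn S Z hP hXP hZP]
  simp only [arlMatrix, Matrix.mul_sub, Matrix.mul_one, Matrix.sub_mul, Matrix.smul_mul,
    trace_sub, trace_smul, smul_eq_mul]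
  ring

variable {Y : Matrix (Fin p) (Fin n) ℝ} {S : Matrix (Fin q) (Fin n) ℝ} {lam : ℝ}
  {μ : Fin n → ℝ} {U : Matrix (Fin n) (Fin n) ℝ} {k : ℕ}

theorem le_arlObjective (hn : 0 < n) (hμ : Monotone μ) (hk : ∀ j, μ j < 0 ↔ (j : ℕ) < k)
    (hU : Uᵀ * U = 1) (hdiag : arlMatrix Y S lam = U * diagonal μ * Uᵀ) {r : ℕ}
    (Z : Matrix (Fin r) (Fin n) ℝ) :
    (n : ℝ)⁻¹ * (∑ j with j.val < min r k, μ j - (arlMatrix Y S lam).trace) ≤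
      arlObjective Y S lam Z := by
  obtain ⟨X, hP, hZP⟩ := exists_isStarProjection_mul_eq (Z * centering n)
  have htr : (X * (Z * centering n)).trace ≤ r := by
    simpa using trace_le_card_of_isIdempotentElem_mul hP.isIdempotentElem
  rw [arlObjective_eq hn Y S lam Z hP rfl hZP, hdiag]
  gcongr
  exact sum_lt_min_le_trace_mul hμ hk hU hP htr

theorem arlObjective_selectionMatrix_mul_transpose (hn : 0 < n) (hU : Uᵀ * U = 1)
    (hdiag : arlMatrix Y S lam = U * diagonal μ * Uᵀ) {r m : ℕ} (hm : m ≤ r)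
    (hμ : ∀ j : Fin n, (j : ℕ) < m → μ j ≠ 0) :
    arlObjective Y S lam (selectionMatrix r n m * Uᵀ) =
      (n : ℝ)⁻¹ * (∑ j with j.val < m, μ j - (arlMatrix Y S lam).trace) := by
  set E := selectionMatrix r n m
  set e : Fin n → ℝ := fun j => if (j : ℕ) < m then 1 else 0
  set Z := E * Uᵀ
  -- the rows of `Z` are eigenvectors of `B` for nonzero eigenvalues, orthogonal to `1` as `B 1 = 0`
  have hZD : Z * centering n = Z := by
    refine mul_centering_eq_self ?_
    ext i
    rw [← mulVec_mulVec, mulVec, dotProduct, Pi.zero_apply]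
    refine Finset.sum_eq_zero fun j _ => ?_
    by_cases hj : (j : ℕ) < m
    · rw [transpose_mulVec_apply_eq_zero hU hdiag (arlMatrix_mulVec_one hn Y S lam) (hμ j hj),
        mul_zero]
    · simp [E, selectionMatrix, hj]
  have hP : IsStarProjection (U * diagonal e * Uᵀ) := by
    refine ⟨?_, ?_⟩
    · rw [IsIdempotentElem, Matrix.mul_assoc, ← Matrix.mul_assoc Uᵀ, ← Matrix.mul_assoc Uᵀ, hU,
        Matrix.one_mul, ← Matrix.mul_assoc, Matrix.mul_assoc U, diagonal_mul_diagonal]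
      congr 3
      ext j
      by_cases hj : (j : ℕ) < m <;> simp [e, hj]
    · simp [IsSelfAdjoint, star_eq_conjTranspose, conjTranspose_eq_transpose_of_trivial,
        Matrix.mul_assoc]
  have hXP : Zᵀ * (Z * centering n) = U * diagonal e * Uᵀ := by
    rw [hZD, transpose_mul, transpose_transpose, Matrix.mul_assoc, ← Matrix.mul_assoc Eᵀ,
      transpose_selectionMatrix_mul hm, Matrix.mul_assoc]
  have hZP : Z * centering n * (U * diagonal e * Uᵀ) = Z * centering n := by
    rw [hZD, Matrix.mul_assoc E, ← Matrix.mul_assoc Uᵀ, ← Matrix.mul_assoc Uᵀ, hU,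
      Matrix.one_mul, ← Matrix.mul_assoc, selectionMatrix_mul_diagonal]
  rw [arlObjective_eq hn Y S lam Z hP hXP hZP, hdiag]
  congr 2
  rw [Matrix.mul_assoc, ← Matrix.mul_assoc Uᵀ, ← Matrix.mul_assoc Uᵀ, hU, Matrix.one_mul,
    ← Matrix.mul_assoc, Matrix.mul_assoc U, diagonal_mul_diagonal, trace_mul_comm,
    ← Matrix.mul_assoc, hU, Matrix.one_mul, trace_diagonal, Finset.sum_filter]
  simp [e]

theorem arlOpt_eq (hn : 0 < n) (hμ : Monotone μ) (hk : ∀ j, μ j < 0 ↔ (j : ℕ) < k)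
    (hU : Uᵀ * U = 1) (hdiag : arlMatrix Y S lam = U * diagonal μ * Uᵀ) (r : ℕ) :
    arlOpt Y S lam r =
      (n : ℝ)⁻¹ * (∑ j with j.val < min r k, μ j - (arlMatrix Y S lam).trace) := by
  have hlower := le_arlObjective hn hμ hk hU hdiag (r := r)
  refine le_antisymm ((ciInf_le ⟨_, Set.forall_mem_range.2 hlower⟩
    (selectionMatrix r n (min r k) * Uᵀ)).trans_eq ?_)
    (le_ciInf hlower)
  exact arlObjective_selectionMatrix_mul_transpose hn hU hdiag (min_le_left r k)
    fun j hj => ((hk j).2 (lt_of_lt_of_le hj (min_le_right r k))).ne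

end ARL

end

theorem optimal_embedding_dimensionality_general {n p q : ℕ} (hn : 0 < n)
    (Y : Matrix (Fin p) (Fin n) ℝ) (S : Matrix (Fin q) (Fin n) ℝ)
    (lam : ℝ)
    (Yt : Matrix (Fin p) (Fin n) ℝ) (St : Matrix (Fin q) (Fin n) ℝ)
    (hYt : Yt = Y * (1 - (n : ℝ)⁻¹ • Matrix.of (fun _ _ => (1 : ℝ))))
    (hSt : St = S * (1 - (n : ℝ)⁻¹ • Matrix.of (fun _ _ => (1 : ℝ))))
    (B : Matrix (Fin n) (Fin n) ℝ)
    (hB : B = lam • (Stᵀ * St) - (1 - lam) • (Ytᵀ * Yt))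
    (μ : Fin n → ℝ) (hμ : Monotone μ)
    (U : Matrix (Fin n) (Fin n) ℝ) (hU : Uᵀ * U = 1)
    (hdiag : B = U * Matrix.diagonal μ * Uᵀ)
    (nneg : ℕ) (hnneg : nneg = (Finset.univ.filter fun i : Fin n => μ i < 0).card) :
    (∀ r : ℕ, nneg ≤ r → arlOpt Y S lam r = arlOpt Y S lam nneg) ∧
    (∀ r : ℕ, 1 ≤ r → r < nneg → arlOpt Y S lam nneg < arlOpt Y S lam r) := by
  have hB' : arlMatrix Y S lam = U * diagonal μ * Uᵀ := by rw [← hdiag, hB, hYt, hSt]; rfl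
  have hk : ∀ j, μ j < 0 ↔ (j : ℕ) < nneg := hnneg ▸ hμ.lt_iff_lt_card_filter_lt 0
  have hval := arlOpt_eq hn hμ hk hU hB'
  refine ⟨fun r hr => by rw [hval, hval, min_eq_right hr, min_self], fun r _ hr => ?_⟩
  rw [hval, hval, min_self, min_eq_left hr.le]
  have hnneg_le : nneg ≤ n := hnneg ▸ (card_le_univ _).trans_eq (Fintype.card_fin n)
  have hsum := Fin.sum_val_lt_lt_sum_val_lt (fun j => (hk j).2) hr hnneg_le
  gcongr

/-- (Theorem 2.) Let `Ỹ = YD`, `S̃ = SD` be the centered label matrices,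
`λ ∈ [0,1]`, `B = λ S̃ᵀS̃ - (1-λ) ỸᵀỸ` with orthogonal diagonalization
`B = U diag(μ) Uᵀ`, `μ` nondecreasing, and let `nneg` be the number of negative
eigenvalues of `B` counted with multiplicity. Then `L(r) = L(nneg)` for every
`r ≥ nneg`, and `L(r) > L(nneg)` for every `1 ≤ r < nneg`, where
`L(r) = inf_Z (1-λ)·J_y(Z) - λ·J_s(Z)` over `Z ∈ ℝ^{r×n}`. -/
theorem optimal_embedding_dimensionality {n p q : ℕ} (hn : 0 < n)
    (Y : Matrix (Fin p) (Fin n) ℝ) (S : Matrix (Fin q) (Fin n) ℝ)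
    (lam : ℝ) (hlam0 : 0 ≤ lam) (hlam1 : lam ≤ 1)
    (Yt : Matrix (Fin p) (Fin n) ℝ) (St : Matrix (Fin q) (Fin n) ℝ)
    (hYt : Yt = Y * (1 - (n : ℝ)⁻¹ • Matrix.of (fun _ _ => (1 : ℝ))))
    (hSt : St = S * (1 - (n : ℝ)⁻¹ • Matrix.of (fun _ _ => (1 : ℝ))))
    (B : Matrix (Fin n) (Fin n) ℝ)
    (hB : B = lam • (Stᵀ * St) - (1 - lam) • (Ytᵀ * Yt))
    (μ : Fin n → ℝ) (hμ : Monotone μ)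
    (U : Matrix (Fin n) (Fin n) ℝ) (hU : Uᵀ * U = 1)
    (hdiag : B = U * Matrix.diagonal μ * Uᵀ)
    (nneg : ℕ) (hnneg : nneg = (Finset.univ.filter fun i : Fin n => μ i < 0).card) :
    (∀ r : ℕ, nneg ≤ r → arlOpt Y S lam r = arlOpt Y S lam nneg) ∧
    (∀ r : ℕ, 1 ≤ r → r < nneg → arlOpt Y S lam nneg < arlOpt Y S lam r) :=
  optimal_embedding_dimensionality_general hn Y S lam Yt St hYt hSt B hB μ hμ U hU hdiag nneg hnneg
end

section
/- Let M : ℝ → ℝ^{m×n} be a matrix-valued function differentiable at θ₀ with M(θ₀) of full column rank n, and let u ∈ ℝ^m. Define P(θ) = M(θ)(M(θ)ᵀM(θ))⁻¹M(θ)ᵀ (well-defined in a neighborhood of θ₀). Then θ ↦ ‖P(θ)u‖² is differentiable at θ₀ and its derivative equals 2·uᵀ (I_m − P(θ₀)) M′(θ₀) (M(θ₀)ᵀM(θ₀))⁻¹ M(θ₀)ᵀ u, where M′(θ₀) is the entrywise derivative of M at θ₀. -/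
/-!
Near `θ₀` the Gram matrix `MᵀM` stays invertible, so `P = M (MᵀM)⁻¹ Mᵀ` is a symmetric
idempotent and `‖P u‖² = uᵀ P u`. The product rule together with `(A⁻¹)' = -A⁻¹ A' A⁻¹`
gives `P' = Q + Qᵀ` with `Q = (I - P) M' (MᵀM)⁻¹ Mᵀ`, and `uᵀ (Q + Qᵀ) u = 2 uᵀ Q u`.
-/

open Matrix Filter Topology

variable {𝕜 : Type*} [NontriviallyNormedField 𝕜] {l m n : Type*}

def HasEntrywiseDerivAt (F : 𝕜 → Matrix m n 𝕜) (F' : Matrix m n 𝕜) (x : 𝕜) : Prop :=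
  ∀ i j, HasDerivAt (fun t => F t i j) (F' i j) x

theorem hasEntrywiseDerivAt_const (C : Matrix m n 𝕜) (x : 𝕜) :
    HasEntrywiseDerivAt (fun _ => C) 0 x :=
  fun i j => hasDerivAt_const x (C i j)

namespace HasEntrywiseDerivAt

variable {F G : 𝕜 → Matrix m n 𝕜} {F' F'' : Matrix m n 𝕜} {x : 𝕜}

theorem unique (hF : HasEntrywiseDerivAt F F' x) (hF' : HasEntrywiseDerivAt F F'' x) :
    F' = F'' :=
  Matrix.ext fun i j => (hF i j).unique (hF' i j)

theorem congr_of_eventuallyEq (hF : HasEntrywiseDerivAt F F' x) (h : G =ᶠ[𝓝 x] F) :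
    HasEntrywiseDerivAt G F' x :=
  fun i j => (hF i j).congr_of_eventuallyEq (h.mono fun _ ht => congrFun (congrFun ht i) j)

theorem transpose (hF : HasEntrywiseDerivAt F F' x) :
    HasEntrywiseDerivAt (fun t => (F t)ᵀ) F'ᵀ x :=
  fun i j => hF j i

theorem mul [Fintype n] {G : 𝕜 → Matrix n l 𝕜} {G' : Matrix n l 𝕜}
    (hF : HasEntrywiseDerivAt F F' x) (hG : HasEntrywiseDerivAt G G' x) :
    HasEntrywiseDerivAt (fun t => F t * G t) (F' * G x + F x * G') x := by
  intro i j
  simp only [Matrix.add_apply, mul_apply, ← Finset.sum_add_distrib]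
  exact HasDerivAt.fun_sum fun k _ => (hF i k).fun_mul (hG k j)

theorem dotProduct_mulVec [Fintype m] [Fintype n] (hF : HasEntrywiseDerivAt F F' x)
    (u : m → 𝕜) (v : n → 𝕜) :
    HasDerivAt (fun t => u ⬝ᵥ F t *ᵥ v) (u ⬝ᵥ F' *ᵥ v) x := by
  simp only [Matrix.mulVec, dotProduct]
  exact HasDerivAt.fun_sum fun i _ =>
    (HasDerivAt.fun_sum fun j _ => (hF i j).mul_const (v j)).const_mul (u i)

end HasEntrywiseDerivAt

section Inverse

variable [Fintype n] [DecidableEq n] {A : 𝕜 → Matrix n n 𝕜} {x : 𝕜}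

theorem differentiableAt_det (hA : ∀ i j, DifferentiableAt 𝕜 (fun t => A t i j) x) :
    DifferentiableAt 𝕜 (fun t => (A t).det) x := by
  simp only [det_apply, Units.smul_def, zsmul_eq_mul]
  exact DifferentiableAt.fun_sum fun σ _ =>
    (DifferentiableAt.fun_finsetProd fun i _ => hA (σ i) i).const_mul _

theorem eventually_isUnit_det (hA : ∀ i j, DifferentiableAt 𝕜 (fun t => A t i j) x)
    (hdet : IsUnit (A x).det) : ∀ᶠ t in 𝓝 x, IsUnit (A t).det := by
  simpa only [isUnit_iff_ne_zero] using
    (differentiableAt_det hA).continuousAt.eventually_ne (isUnit_iff_ne_zero.mp hdet)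

theorem differentiableAt_inv_apply (hA : ∀ i j, DifferentiableAt 𝕜 (fun t => A t i j) x)
    (hdet : IsUnit (A x).det) (i j : n) :
    DifferentiableAt 𝕜 (fun t => (A t)⁻¹ i j) x := by
  have hcramer : (fun t => (A t)⁻¹ i j)
      = fun t => ((A t).det)⁻¹ * ((A t).updateRow j (Pi.single i 1)).det := funext fun t => by
    rw [inv_def, Matrix.smul_apply, adjugate_apply, smul_eq_mul, Ring.inverse_eq_inv']
  rw [hcramer]
  refine ((differentiableAt_det hA).inv (isUnit_iff_ne_zero.mp hdet)).mul
    (differentiableAt_det fun a b => ?_)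
  by_cases hab : a = j
  · simp only [hab, updateRow_self]
    exact differentiableAt_const _
  · simp only [updateRow_ne hab]
    exact hA a b

theorem HasEntrywiseDerivAt.inv {A' : Matrix n n 𝕜} (hA : HasEntrywiseDerivAt A A' x)
    (hdet : IsUnit (A x).det) :
    HasEntrywiseDerivAt (fun t => (A t)⁻¹) (-((A x)⁻¹ * A' * (A x)⁻¹)) x := by
  have hA_diff i j := (hA i j).differentiableAt
  set D : Matrix n n 𝕜 := of fun i j => deriv (fun t => (A t)⁻¹ i j) x
  have hD : HasEntrywiseDerivAt (fun t => (A t)⁻¹) D x := fun i j =>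
    (differentiableAt_inv_apply hA_diff hdet i j).hasDerivAt
  have hconst : (fun t => A t * (A t)⁻¹) =ᶠ[𝓝 x] fun _ => 1 :=
    (eventually_isUnit_det hA_diff hdet).mono fun t ht => mul_nonsing_inv _ ht
  have hzero : A' * (A x)⁻¹ + A x * D = 0 :=
    (hA.mul hD).unique ((hasEntrywiseDerivAt_const 1 x).congr_of_eventuallyEq hconst)
  have hD_eq : D = -((A x)⁻¹ * A' * (A x)⁻¹) := by
    calc D = (A x)⁻¹ * (A x * D) := by rw [← Matrix.mul_assoc, nonsing_inv_mul _ hdet, one_mul]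
      _ = _ := by rw [eq_neg_of_add_eq_zero_right hzero]; noncomm_ring
  exact hD_eq ▸ hD

end Inverse

namespace Matrix

section Projection

variable {R : Type*} [CommRing R] [Fintype m] [Fintype n] [DecidableEq n]

-- When `AᵀA` is singular, `(AᵀA)⁻¹ = 0` and hence `orthProj A = 0`.
noncomputable def orthProj (A : Matrix m n R) : Matrix m m R := A * (Aᵀ * A)⁻¹ * Aᵀ

theorem isSymm_orthProj (A : Matrix m n R) : (orthProj A).IsSymm := by
  simp only [IsSymm, orthProj, transpose_mul, transpose_transpose, transpose_nonsing_inv,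
    Matrix.mul_assoc]

theorem isIdempotentElem_orthProj {A : Matrix m n R} (h : IsUnit (Aᵀ * A).det) :
    IsIdempotentElem (orthProj A) := by
  have hfix : Aᵀ * orthProj A = Aᵀ := by
    rw [orthProj, ← Matrix.mul_assoc, ← Matrix.mul_assoc, mul_nonsing_inv _ h, Matrix.one_mul]
  change A * (Aᵀ * A)⁻¹ * Aᵀ * orthProj A = orthProj A
  rw [Matrix.mul_assoc _ Aᵀ, hfix]
  rfl

end Projection

theorem IsSymm.sum_mulVec_sq {R : Type*} [CommRing R] [Fintype m] {P : Matrix m m R}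
    (hs : P.IsSymm) (hi : IsIdempotentElem P) (u : m → R) :
    ∑ i, (P *ᵥ u) i ^ 2 = u ⬝ᵥ P *ᵥ u :=
  calc ∑ i, (P *ᵥ u) i ^ 2 = P *ᵥ u ⬝ᵥ P *ᵥ u := by simp only [dotProduct, sq]
    _ = u ⬝ᵥ (Pᵀ * P) *ᵥ u := by rw [← mulVec_mulVec, dotProduct_mulVec u Pᵀ, vecMul_transpose]
    _ = u ⬝ᵥ P *ᵥ u := by rw [hs.eq, hi.eq]

theorem isUnit_of_rank_eq_card {K : Type*} [Field K] [Fintype n] [DecidableEq n]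
    {B : Matrix n n K} (h : B.rank = Fintype.card n) : IsUnit B := by
  have hrange : LinearMap.range B.mulVecLin = ⊤ :=
    Submodule.eq_top_of_finrank_eq (by rwa [Module.finrank_fintype_fun_eq_card])
  exact mulVec_surjective_iff_isUnit.mp (LinearMap.range_eq_top.mp hrange)

theorem isUnit_det_transpose_mul_self {K : Type*} [Field K] [LinearOrder K]
    [IsStrictOrderedRing K] [Fintype m] [Fintype n] [DecidableEq n] {A : Matrix m n K}
    (h : A.rank = Fintype.card n) : IsUnit (Aᵀ * A).det :=
  (isUnit_iff_isUnit_det _).mp (isUnit_of_rank_eq_card (by rwa [rank_transpose_mul_self]))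

end Matrix

theorem HasEntrywiseDerivAt.orthProj [Fintype m] [DecidableEq m] [Fintype n] [DecidableEq n]
    {A : 𝕜 → Matrix m n 𝕜} {A' : Matrix m n 𝕜} {x : 𝕜} (hA : HasEntrywiseDerivAt A A' x)
    (h : IsUnit ((A x)ᵀ * A x).det) :
    HasEntrywiseDerivAt (fun t => orthProj (A t))
      ((1 - orthProj (A x)) * A' * ((A x)ᵀ * A x)⁻¹ * (A x)ᵀ
        + ((1 - orthProj (A x)) * A' * ((A x)ᵀ * A x)⁻¹ * (A x)ᵀ)ᵀ) x := by
  unfold Matrix.orthProj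
  convert (hA.mul ((hA.transpose.mul hA).inv h)).mul hA.transpose using 1
  have hsymm : (((A x)ᵀ * A x)⁻¹)ᵀ = ((A x)ᵀ * A x)⁻¹ := by
    rw [transpose_nonsing_inv, transpose_mul, transpose_transpose]
  simp only [transpose_mul, transpose_sub, transpose_transpose, hsymm, Matrix.sub_mul,
    Matrix.add_mul, Matrix.mul_add, Matrix.neg_mul, Matrix.mul_neg, Matrix.one_mul,
    Matrix.mul_assoc]
  abel

/-- For a matrix-valued function `M : ℝ → ℝ^{m×n}` differentiable (entrywise) at `θ₀`
with `M(θ₀)` of full column rank, `P(θ) = M(θ)(M(θ)ᵀM(θ))⁻¹M(θ)ᵀ` and `u ∈ ℝ^m`: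
`θ ↦ ‖P(θ)u‖²` is differentiable at `θ₀` with derivative
`2·uᵀ(I - P(θ₀)) M′(θ₀) (M(θ₀)ᵀM(θ₀))⁻¹ M(θ₀)ᵀ u`. -/
theorem deriv_sq_norm_projection {m n : ℕ}
    (M : ℝ → Matrix (Fin m) (Fin n) ℝ) (θ₀ : ℝ)
    (M' : Matrix (Fin m) (Fin n) ℝ)
    (hM : ∀ i j, HasDerivAt (fun θ => M θ i j) (M' i j) θ₀)
    (hrank : (M θ₀).rank = n) (u : Fin m → ℝ) :
    HasDerivAt
      (fun θ => ∑ i, ((M θ * ((M θ)ᵀ * M θ)⁻¹ * (M θ)ᵀ).mulVec u i) ^ 2)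
      (2 * (u ⬝ᵥ ((1 - M θ₀ * ((M θ₀)ᵀ * M θ₀)⁻¹ * (M θ₀)ᵀ) * M' *
          ((M θ₀)ᵀ * M θ₀)⁻¹ * (M θ₀)ᵀ).mulVec u))
      θ₀ := by
  have hMd : HasEntrywiseDerivAt M M' θ₀ := hM
  have hgram : IsUnit ((M θ₀)ᵀ * M θ₀).det :=
    isUnit_det_transpose_mul_self (hrank.trans (Fintype.card_fin n).symm)
  have hgram_near : ∀ᶠ θ in 𝓝 θ₀, IsUnit ((M θ)ᵀ * M θ).det :=
    eventually_isUnit_det (fun i j => (hMd.transpose.mul hMd i j).differentiableAt) hgram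
  have hnorm_sq : (fun θ => ∑ i, (orthProj (M θ) *ᵥ u) i ^ 2)
      =ᶠ[𝓝 θ₀] fun θ => u ⬝ᵥ orthProj (M θ) *ᵥ u :=
    hgram_near.mono fun θ hθ =>
      (isSymm_orthProj (M θ)).sum_mulVec_sq (isIdempotentElem_orthProj hθ) u
  have hquad := (hMd.orthProj hgram).dotProduct_mulVec u u
  refine (hquad.congr_of_eventuallyEq hnorm_sq).congr_deriv ?_
  rw [add_mulVec, dotProduct_add, dotProduct_mulVec u _ᵀ, vecMul_transpose, dotProduct_comm _ u]
  exact (two_mul _).symm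
end
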